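/- arXiv:1801.05355 — 13 statements merged into one kernel-verified Lean document; each statement's English description precedes it below -/
import Mathlib

section
/- Let ℓ be a prime, n ≥ 1, and γ a 2×2 matrix over Z/ℓⁿZ such that the characteristic polynomial of the reduction of γ modulo ℓ has two distinct roots in Z/ℓZ. Then there exist λ₁, λ₂ ∈ Z/ℓⁿZ with λ₁ ≢ λ₂ (mod ℓ), each a root of the characteristic polynomial of γ, and primitive vectors v₁, v₂ ∈ (Z/ℓⁿZ)² with γ·v₁ = λ₁·v₁ and γ·v₂ = λ₂·v₂. -/
open Polynomial Matrix

private lemma int_hensel (ℓ : ℕ) (hℓ : ℓ.Prime) (f : Polynomial ℤ) (a₀ : ℤ)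
    (h0 : (ℓ : ℤ) ∣ f.eval a₀) (h1 : ¬ (ℓ : ℤ) ∣ f.derivative.eval a₀) :
    ∀ k : ℕ, 1 ≤ k → ∃ a : ℤ, (ℓ : ℤ) ∣ (a - a₀) ∧ (ℓ : ℤ) ^ k ∣ f.eval a := by
  haveI := Fact.mk hℓ
  intro k hk
  induction k with
  | zero => omega
  | succ k ih =>
    rcases Nat.eq_zero_or_pos k with rfl | hk1
    · exact ⟨a₀, by simp, by simpa using h0⟩
    obtain ⟨a, ha0, ha⟩ := ih hk1
    have hcast : ((a : ZMod ℓ)) = (a₀ : ZMod ℓ) := by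
      have := (ZMod.intCast_zmod_eq_zero_iff_dvd (a - a₀) ℓ).2 ha0
      push_cast at this
      linear_combination this
    have key : ∀ (G : Polynomial ℤ) (b : ℤ), ((G.eval b : ℤ) : ZMod ℓ)
        = (G.map (Int.castRingHom (ZMod ℓ))).eval ((b : ℤ) : ZMod ℓ) :=
      fun G b => (Polynomial.eval_intCast_map (Int.castRingHom (ZMod ℓ)) G b).symm
    have hd : ((f.derivative.eval a : ℤ) : ZMod ℓ) ≠ 0 := by
      rw [key, hcast, ← key]
      simpa [ZMod.intCast_zmod_eq_zero_iff_dvd] using h1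
    obtain ⟨u, hu⟩ := ZMod.intCast_surjective (((f.derivative.eval a : ℤ) : ZMod ℓ))⁻¹
    have hdiv1 : (ℓ : ℤ) ∣ (1 - u * f.derivative.eval a) := by
      rw [← ZMod.intCast_zmod_eq_zero_iff_dvd]
      push_cast
      rw [hu, inv_mul_cancel₀ hd, sub_self]
    obtain ⟨c, hc⟩ := f.binomExpansion a (-(f.eval a) * u)
    have hℓa : (ℓ : ℤ) ∣ f.eval a := dvd_trans (dvd_pow_self (ℓ : ℤ) (by omega)) ha
    refine ⟨a + (-(f.eval a) * u), ?_, ?_⟩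
    · have h2 : (ℓ : ℤ) ∣ (-(f.eval a) * u) := ((dvd_neg).2 hℓa).mul_right u
      have : a + (-(f.eval a) * u) - a₀ = (a - a₀) + (-(f.eval a) * u) := by ring
      rw [this]
      exact dvd_add ha0 h2
    · rw [hc]
      have heq : f.eval a + f.derivative.eval a * (-(f.eval a) * u) + c * (-(f.eval a) * u) ^ 2
          = f.eval a * (1 - u * f.derivative.eval a) + (c * u ^ 2) * (f.eval a) ^ 2 := by ring
      rw [heq]
      apply dvd_add
      · rw [pow_succ]
        exact mul_dvd_mul ha hdiv1
      · refine Dvd.dvd.mul_left ?_ _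
        calc (ℓ : ℤ) ^ (k + 1) ∣ (ℓ : ℤ) ^ (2 * k) := pow_dvd_pow _ (by omega)
          _ = ((ℓ : ℤ) ^ k) ^ 2 := by rw [mul_comm 2 k, pow_mul]
          _ ∣ (f.eval a) ^ 2 := pow_dvd_pow_of_dvd ha 2

private lemma zmod_hensel (ℓ n : ℕ) (hℓ : ℓ.Prime) (hn : n ≠ 0)
    (f : Polynomial (ZMod (ℓ ^ n))) (μ : ZMod ℓ)
    (hroot : (f.map (ZMod.castHom (dvd_pow_self ℓ hn) (ZMod ℓ))).eval μ = 0)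
    (hder : (f.map (ZMod.castHom (dvd_pow_self ℓ hn) (ZMod ℓ))).derivative.eval μ ≠ 0) :
    ∃ lam : ZMod (ℓ ^ n), ZMod.castHom (dvd_pow_self ℓ hn) (ZMod ℓ) lam = μ ∧ f.eval lam = 0 := by
  obtain ⟨F, hF⟩ :=
    Polynomial.map_surjective (Int.castRingHom (ZMod (ℓ ^ n))) ZMod.intCast_surjective f
  obtain ⟨a₀, ha₀⟩ := ZMod.intCast_surjective μ
  have hmap : f.map (ZMod.castHom (dvd_pow_self ℓ hn) (ZMod ℓ))
      = F.map (Int.castRingHom (ZMod ℓ)) := by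
    rw [← hF, Polynomial.map_map]
    congr 1
    exact RingHom.ext_int _ _
  have key : ∀ (G : Polynomial ℤ) (b : ℤ), ((G.eval b : ℤ) : ZMod ℓ)
      = (G.map (Int.castRingHom (ZMod ℓ))).eval ((b : ℤ) : ZMod ℓ) :=
    fun G b => (Polynomial.eval_intCast_map (Int.castRingHom (ZMod ℓ)) G b).symm
  have h0 : (ℓ : ℤ) ∣ F.eval a₀ := by
    rw [← ZMod.intCast_zmod_eq_zero_iff_dvd, key, ha₀, ← hmap, hroot]
  have h1 : ¬ (ℓ : ℤ) ∣ F.derivative.eval a₀ := by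
    rw [← ZMod.intCast_zmod_eq_zero_iff_dvd, key, ← Polynomial.derivative_map, ha₀, ← hmap]
    exact hder
  obtain ⟨a, ha0, ha⟩ := int_hensel ℓ hℓ F a₀ h0 h1 n (by omega)
  refine ⟨(a : ZMod (ℓ ^ n)), ?_, ?_⟩
  · rw [map_intCast]
    have : ((a : ZMod ℓ)) = (a₀ : ZMod ℓ) := by
      have := (ZMod.intCast_zmod_eq_zero_iff_dvd (a - a₀) ℓ).2 ha0
      push_cast at this
      linear_combination this
    rw [this, ha₀]
  · have key2 : ∀ (G : Polynomial ℤ) (b : ℤ), ((G.eval b : ℤ) : ZMod (ℓ ^ n))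
        = (G.map (Int.castRingHom (ZMod (ℓ ^ n)))).eval ((b : ℤ) : ZMod (ℓ ^ n)) :=
      fun G b => (Polynomial.eval_intCast_map (Int.castRingHom (ZMod (ℓ ^ n))) G b).symm
    rw [← hF, ← key2]
    rw [ZMod.intCast_zmod_eq_zero_iff_dvd]
    simpa [Nat.cast_pow] using ha

private lemma charpoly_eval2 {R : Type*} [CommRing R] (M : Matrix (Fin 2) (Fin 2) R) (x : R) :
    M.charpoly.eval x = Matrix.det (x • (1 : Matrix (Fin 2) (Fin 2) R) - M) := by
  rw [Matrix.charpoly, ← Polynomial.coe_evalRingHom, RingHom.map_det]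
  congr 1
  ext i j
  rw [RingHom.mapMatrix_apply]
  by_cases h : i = j <;>
    simp [h, Matrix.charmatrix_apply, Matrix.one_apply, Matrix.diagonal_apply,
      Matrix.map_apply, Matrix.sub_apply, Matrix.smul_apply]

/-- A vector in `(ZMod N)²` is primitive (w.r.t. `ℓ ∣ N`) if its reduction
modulo `ℓ` is nonzero. -/
def IsPrimitive (ℓ N : ℕ) (h : ℓ ∣ N) (v : Fin 2 → ZMod N) : Prop :=
  (fun i => ZMod.castHom h (ZMod ℓ) (v i)) ≠ 0

private lemma exists_eigvec (ℓ n : ℕ) (hn : n ≠ 0)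
    (γ : Matrix (Fin 2) (Fin 2) (ZMod (ℓ ^ n))) (lam : ZMod (ℓ ^ n))
    (hroot : γ.charpoly.eval lam = 0)
    (hns : γ.map (ZMod.castHom (dvd_pow_self ℓ hn) (ZMod ℓ))
      ≠ (ZMod.castHom (dvd_pow_self ℓ hn) (ZMod ℓ) lam) • 1) :
    ∃ v : Fin 2 → ZMod (ℓ ^ n),
      IsPrimitive ℓ (ℓ ^ n) (dvd_pow_self ℓ hn) v ∧ γ.mulVec v = lam • v := by
  set σ := ZMod.castHom (dvd_pow_self ℓ hn) (ZMod ℓ) with hσ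
  set M := lam • (1 : Matrix (Fin 2) (Fin 2) (ZMod (ℓ ^ n))) - γ with hM
  have hdet : M.det = 0 := by rw [← charpoly_eval2]; exact hroot
  have hMmap : M.map σ = (σ lam) • 1 - γ.map σ := by
    ext i j
    by_cases h : i = j <;>
      simp [hM, h, Matrix.one_apply, Matrix.map_apply, Matrix.sub_apply, Matrix.smul_apply]
  have hMbar : M.map σ ≠ 0 := by
    intro h
    apply hns
    rw [hMmap] at h
    rw [sub_eq_zero] at h
    exact h.symm
  have hMA : M * M.adjugate = 0 := by rw [Matrix.mul_adjugate, hdet, zero_smul]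
  have hAne : M.adjugate.map σ ≠ 0 := by
    intro h
    apply hMbar
    have h' : (M.map σ).adjugate = 0 := by
      have hadj := σ.map_adjugate M
      rw [RingHom.mapMatrix_apply, RingHom.mapMatrix_apply] at hadj
      rw [← hadj]; exact h
    rw [Matrix.adjugate_fin_two] at h'
    ext i j
    fin_cases i <;> fin_cases j
    · simpa using congr_fun (congr_fun h' 1) 1
    · simpa using congr_fun (congr_fun h' 0) 1
    · simpa using congr_fun (congr_fun h' 1) 0
    · simpa using congr_fun (congr_fun h' 0) 0
  have hex : ∃ i j, σ (M.adjugate i j) ≠ 0 := by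
    by_contra hc
    push_neg at hc
    apply hAne
    ext i j
    simpa [Matrix.map_apply] using hc i j
  obtain ⟨i0, j0, hij⟩ := hex
  refine ⟨fun i => M.adjugate i j0, ?_, ?_⟩
  · intro h
    exact hij (congr_fun h i0)
  · have h0 : ∀ i, (M * M.adjugate) i j0 = 0 := by rw [hMA]; intro i; simp
    have hv : M.mulVec (fun i => M.adjugate i j0) = 0 := by
      funext i
      simpa [Matrix.mulVec, Matrix.mul_apply, dotProduct] using h0 i
    rw [hM, Matrix.sub_mulVec, Matrix.smul_mulVec, Matrix.one_mulVec, sub_eq_zero] at hv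
    exact hv.symm

/-- If the characteristic polynomial of the reduction of `γ` modulo `ℓ`
has two distinct roots, then `γ` has two eigenvalues mod `ℓ^n`, distinct mod `ℓ`, with
corresponding primitive eigenvectors. -/
theorem stmt_0 (ℓ n : ℕ) (hℓ : ℓ.Prime) (hn : 1 ≤ n)
    (γ : Matrix (Fin 2) (Fin 2) (ZMod (ℓ ^ n)))
    (hroots : ∃ μ₁ μ₂ : ZMod ℓ, μ₁ ≠ μ₂ ∧
      ((γ.map (ZMod.castHom (dvd_pow_self ℓ (by omega : n ≠ 0)) (ZMod ℓ))).charpoly).IsRoot μ₁ ∧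
      ((γ.map (ZMod.castHom (dvd_pow_self ℓ (by omega : n ≠ 0)) (ZMod ℓ))).charpoly).IsRoot μ₂) :
    ∃ lam₁ lam₂ : ZMod (ℓ ^ n),
      ZMod.castHom (dvd_pow_self ℓ (by omega : n ≠ 0)) (ZMod ℓ) lam₁ ≠
        ZMod.castHom (dvd_pow_self ℓ (by omega : n ≠ 0)) (ZMod ℓ) lam₂ ∧
      γ.charpoly.IsRoot lam₁ ∧ γ.charpoly.IsRoot lam₂ ∧
      ∃ v₁ v₂ : Fin 2 → ZMod (ℓ ^ n),
        IsPrimitive ℓ (ℓ ^ n) (dvd_pow_self ℓ (by omega : n ≠ 0)) v₁ ∧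
        IsPrimitive ℓ (ℓ ^ n) (dvd_pow_self ℓ (by omega : n ≠ 0)) v₂ ∧
        γ.mulVec v₁ = lam₁ • v₁ ∧ γ.mulVec v₂ = lam₂ • v₂ := by
  haveI := Fact.mk hℓ
  have hn0 : n ≠ 0 := by omega
  obtain ⟨μ₁, μ₂, hne, h1, h2⟩ := hroots
  set σ := ZMod.castHom (dvd_pow_self ℓ hn0) (ZMod ℓ) with hσdef
  set χ : Polynomial (ZMod ℓ) := (γ.map σ).charpoly with hχ
  have hmonic : χ.Monic := Matrix.charpoly_monic _
  have hne0 : χ ≠ 0 := hmonic.ne_zero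
  have hdeg : χ.natDegree = 2 := by
    rw [hχ, Matrix.charpoly_natDegree_eq_dim]
    simp
  -- roots multiset
  have hm1 : μ₁ ∈ χ.roots := by rw [Polynomial.mem_roots hne0]; exact h1
  have hm2 : μ₂ ∈ χ.roots := by rw [Polynomial.mem_roots hne0]; exact h2
  have hle : ({μ₁, μ₂} : Multiset (ZMod ℓ)) ≤ χ.roots := by
    rw [Multiset.le_iff_count]
    intro x
    by_cases hx1 : x = μ₁
    · subst hx1
      have : Multiset.count x ({x, μ₂} : Multiset (ZMod ℓ)) = 1 := by
        simp [Multiset.count_cons, Multiset.count_singleton, hne]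
      rw [this]
      exact Multiset.one_le_count_iff_mem.2 hm1
    by_cases hx2 : x = μ₂
    · subst hx2
      have : Multiset.count x ({μ₁, x} : Multiset (ZMod ℓ)) = 1 := by
        simp [Multiset.count_cons, Multiset.count_singleton, Ne.symm hx1]
      rw [this]
      exact Multiset.one_le_count_iff_mem.2 hm2
    · have : Multiset.count x ({μ₁, μ₂} : Multiset (ZMod ℓ)) = 0 := by
        simp [Multiset.count_cons, Multiset.count_singleton, hx1, hx2]
      rw [this]
      exact Nat.zero_le _
  have hrootsEq : χ.roots = {μ₁, μ₂} := by
    refine (Multiset.eq_of_le_of_card_le hle ?_).symm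
    have := Polynomial.card_roots' χ
    rw [hdeg] at this
    simpa using this
  have hfact : χ = (X - C μ₁) * (X - C μ₂) := by
    have hcard : χ.roots.card = χ.natDegree := by rw [hrootsEq, hdeg]; simp
    have := Polynomial.prod_multiset_X_sub_C_of_monic_of_roots_card_eq hmonic hcard
    rw [hrootsEq] at this
    rw [← this]
    simp [Multiset.map_cons, Multiset.prod_cons]
  have hder1 : χ.derivative.eval μ₁ ≠ 0 := by
    have : χ.derivative.eval μ₁ = μ₁ - μ₂ := by
      rw [hfact]
      simp [Polynomial.derivative_mul]
    rw [this]
    exact sub_ne_zero.2 hne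
  have hder2 : χ.derivative.eval μ₂ ≠ 0 := by
    have : χ.derivative.eval μ₂ = μ₂ - μ₁ := by
      rw [hfact]
      simp [Polynomial.derivative_mul]
    rw [this]
    exact sub_ne_zero.2 (Ne.symm hne)
  have hmapχ : γ.charpoly.map σ = χ := (Matrix.charpoly_map γ σ).symm
  obtain ⟨lam₁, hσ1, hev1⟩ := zmod_hensel ℓ n hℓ hn0 γ.charpoly μ₁
    (by rw [hmapχ]; exact h1) (by rw [hmapχ]; exact hder1)
  obtain ⟨lam₂, hσ2, hev2⟩ := zmod_hensel ℓ n hℓ hn0 γ.charpoly μ₂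
    (by rw [hmapχ]; exact h2) (by rw [hmapχ]; exact hder2)
  -- γ.map σ is not scalar μ₁ or μ₂
  have hnonscalar : ∀ μ μ' : ZMod ℓ, μ ≠ μ' → χ.IsRoot μ' → γ.map σ ≠ μ • 1 := by
    intro μ μ' hμ hroot' hscal
    have : χ.eval μ' = (μ' - μ) ^ 2 := by
      rw [hχ, charpoly_eval2, hscal]
      rw [← sub_smul]
      rw [Matrix.det_smul]
      simp
    rw [hroot'] at this
    have := pow_eq_zero_iff (n := 2) (by norm_num) |>.1 this.symm
    exact hμ (sub_eq_zero.1 this).symm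
  obtain ⟨v₁, hp1, hev1'⟩ := exists_eigvec ℓ n hn0 γ lam₁ hev1
    (by rw [hσ1]; exact hnonscalar μ₁ μ₂ hne h2)
  obtain ⟨v₂, hp2, hev2'⟩ := exists_eigvec ℓ n hn0 γ lam₂ hev2
    (by rw [hσ2]; exact hnonscalar μ₂ μ₁ (Ne.symm hne) h1)
  exact ⟨lam₁, lam₂, by rw [hσ1, hσ2] at *; exact hne, hev1, hev2, v₁, v₂, hp1, hp2, hev1', hev2'⟩
end

section
/- Let ℓ be a prime, n ≥ 2, and γ ∈ GL₂(Z/ℓⁿZ) such that the characteristic polynomial of the reduction of γ modulo ℓ has two distinct roots in Z/ℓZ. Let w ∈ (Z/ℓ^{n−1}Z)² be a primitive vector that is an eigenvector of the reduction of γ modulo ℓ^{n−1}. Then there exists a primitive vector v ∈ (Z/ℓⁿZ)² that is an eigenvector of γ and whose reduction modulo ℓ^{n−1} equals u·w for some unit u ∈ (Z/ℓ^{n−1}Z)ˣ. -/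
/-!
Normalise `w` so that one coordinate is `1`, say `w ∝ (1, s₀)`. Then `(1, s)` is an eigenvector
of `γ = [[a, b], [c, d]]` iff `s` is a root of `f = b X² + (a - d) X - c`, and `s₀` is a root of
`f` modulo `ℓⁿ⁻¹`. Since `f'(s)² = disc γ + 4 b f(s)` and the discriminant of `γ` is a unit (its
reduction mod `ℓ` is `(μ₁ - μ₂)²`), `f'` is a unit at every lift `t` of `s₀`. As `f(t)` lies in
the kernel of reduction mod `ℓⁿ⁻¹`, which squares to zero, the Newton step `t - f(t) / f'(t)` is
an exact root of `f`.
-/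

open Polynomial

namespace ZMod

theorem sq_eq_zero_of_castHom_eq_zero {m k : ℕ} (h : k ∣ m) (hm : m ∣ k ^ 2) {x : ZMod m}
    (hx : castHom h (ZMod k) x = 0) : x ^ 2 = 0 := by
  obtain ⟨a, rfl⟩ := intCast_surjective x
  rw [map_intCast, intCast_zmod_eq_zero_iff_dvd] at hx
  rw [← Int.cast_pow, intCast_zmod_eq_zero_iff_dvd]
  exact (Int.natCast_dvd_natCast.2 hm).trans (by simpa using pow_dvd_pow_of_dvd hx 2)

theorem isUnit_of_isUnit_castHom_pow {p m : ℕ} (hm : m ≠ 0) {x : ZMod (p ^ m)}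
    (hx : IsUnit (castHom (dvd_pow_self p hm) (ZMod p) x)) : IsUnit x := by
  obtain ⟨a, rfl⟩ := intCast_surjective x
  rw [map_intCast, coe_int_isUnit_iff_isCoprime] at hx
  rw [coe_int_isUnit_iff_isCoprime, Nat.cast_pow]
  exact hx.pow_left

end ZMod

theorem Polynomial.exists_eval_add_mul_eq_zero_of_sq_eval_eq_zero {R : Type*} [CommRing R]
    {f : R[X]} {t : R} (hsq : f.eval t ^ 2 = 0) (hu : IsUnit (f.derivative.eval t)) :
    ∃ r, f.eval (t + f.eval t * r) = 0 := by
  obtain ⟨k, hk⟩ := f.binomExpansion t (f.eval t * -↑hu.unit⁻¹)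
  refine ⟨-↑hu.unit⁻¹, ?_⟩
  rw [hk]
  linear_combination (-f.eval t) * hu.mul_val_inv + k * (↑hu.unit⁻¹ : R) ^ 2 * hsq

namespace Matrix

variable {R S : Type*} [CommRing R] [CommRing S]

lemma map_discr_fin_two (f : R →+* S) (M : Matrix (Fin 2) (Fin 2) R) :
    f M.discr = (M.map f).discr := by
  simp [discr_fin_two, trace_fin_two, det_fin_two, map_ofNat]

lemma discr_eq_sq_sub_of_isRoot_charpoly [IsDomain R] {M : Matrix (Fin 2) (Fin 2) R}
    {μ₁ μ₂ : R} (hne : μ₁ ≠ μ₂) (h₁ : M.charpoly.IsRoot μ₁) (h₂ : M.charpoly.IsRoot μ₂) :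
    M.discr = (μ₁ - μ₂) ^ 2 := by
  simp only [charpoly_fin_two, IsRoot, eval_add, eval_sub, eval_mul, eval_pow, eval_X, eval_C]
    at h₁ h₂
  have htr : M.trace = μ₁ + μ₂ := by
    have : (μ₁ - μ₂) * (μ₁ + μ₂ - M.trace) = 0 := by linear_combination h₁ - h₂
    linear_combination -((mul_eq_zero.1 this).resolve_left (sub_ne_zero.2 hne))
  rw [discr_fin_two]
  linear_combination (M.trace + μ₁ + μ₂) * htr - 4 * h₁ - 4 * μ₁ * htr

/-- The roots of this polynomial are the slopes `s` of the eigenlines of `M` spanned by `![1, s]`. -/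
noncomputable def eigenslopePoly (M : Matrix (Fin 2) (Fin 2) R) : R[X] :=
  C (M 0 1) * X ^ 2 + C (M 0 0 - M 1 1) * X - C (M 1 0)

variable {M : Matrix (Fin 2) (Fin 2) R}

lemma eval_eigenslopePoly (s : R) :
    M.eigenslopePoly.eval s = M 0 1 * s ^ 2 + (M 0 0 - M 1 1) * s - M 1 0 := by
  simp [eigenslopePoly]

lemma eval_derivative_eigenslopePoly (s : R) :
    M.eigenslopePoly.derivative.eval s = 2 * M 0 1 * s + (M 0 0 - M 1 1) := by
  simp only [eigenslopePoly, derivative_sub, derivative_add, derivative_C_mul_X_pow,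
    derivative_C_mul_X, derivative_C, eval_add, eval_mul, eval_C, eval_X, Nat.cast_ofNat,
    Nat.reduceSub, pow_one, sub_zero]
  ring

lemma sq_eval_derivative_eigenslopePoly (s : R) :
    (M.eigenslopePoly.derivative.eval s) ^ 2 = M.discr + 4 * M 0 1 * M.eigenslopePoly.eval s := by
  rw [eval_derivative_eigenslopePoly, eval_eigenslopePoly, discr_fin_two, trace_fin_two,
    det_fin_two]
  ring

lemma mulVec_eq_smul_of_eval_eigenslopePoly {s : R} (hs : M.eigenslopePoly.eval s = 0) :
    M *ᵥ ![1, s] = (M 0 0 + M 0 1 * s) • ![1, s] := by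
  rw [eval_eigenslopePoly] at hs
  ext i
  fin_cases i <;>
    simp only [mulVec, dotProduct, Fin.sum_univ_two, Fin.zero_eta, Fin.mk_one, cons_val_zero,
      cons_val_one, cons_val_fin_one, Pi.smul_apply, smul_eq_mul, mul_one]
  linear_combination -hs

lemma eval_eigenslopePoly_eq_zero {w : Fin 2 → R} (hw : IsUnit (w 0)) {μ : R}
    (hμ : M *ᵥ w = μ • w) : M.eigenslopePoly.eval (w 1 * ↑hw.unit⁻¹) = 0 := by
  have e₀ := congrFun hμ 0
  have e₁ := congrFun hμ 1
  simp only [mulVec, dotProduct, Fin.sum_univ_two, Pi.smul_apply, smul_eq_mul] at e₀ e₁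
  rw [eval_eigenslopePoly]
  linear_combination (↑hw.unit⁻¹ : R) ^ 2 * w 1 * e₀ - ↑hw.unit⁻¹ * e₁
    + (M 1 0 - M 0 0 * w 1 * ↑hw.unit⁻¹ + μ * w 1 * ↑hw.unit⁻¹) * hw.mul_val_inv

lemma map_eval_eigenslopePoly (π : R →+* S) (s : R) :
    π (M.eigenslopePoly.eval s) = (M.map π).eigenslopePoly.eval (π s) := by
  simp [eval_eigenslopePoly]

variable (π : R →+* S) (hπ : Function.Surjective π) (hker : ∀ x, π x = 0 → x ^ 2 = 0)
include hπ hker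

theorem exists_eigenvector_lift_of_isUnit_zero (hM : IsUnit M.discr) {w : Fin 2 → S}
    (hw : IsUnit (w 0)) {μ : S} (hμ : M.map π *ᵥ w = μ • w) :
    ∃ v : Fin 2 → R, v 0 = 1 ∧ (∃ lam : R, M *ᵥ v = lam • v) ∧ ∃ u : Sˣ, π ∘ v = (u : S) • w := by
  obtain ⟨t, ht⟩ := hπ (w 1 * ↑hw.unit⁻¹)
  have hroot : π (M.eigenslopePoly.eval t) = 0 := by
    rw [map_eval_eigenslopePoly, ht, eval_eigenslopePoly_eq_zero hw hμ]
  have hsq := hker _ hroot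
  have hderiv : IsUnit (M.eigenslopePoly.derivative.eval t) := by
    refine (isUnit_pow_iff two_ne_zero).1 ?_
    rw [sq_eval_derivative_eigenslopePoly]
    refine IsNilpotent.isUnit_add_left_of_commute ⟨2, ?_⟩ hM (Commute.all _ _)
    rw [mul_pow, hsq, mul_zero]
  obtain ⟨r, hr⟩ := Polynomial.exists_eval_add_mul_eq_zero_of_sq_eval_eq_zero hsq hderiv
  refine ⟨![1, t + M.eigenslopePoly.eval t * r], rfl, ⟨_, mulVec_eq_smul_of_eval_eigenslopePoly hr⟩,
    hw.unit⁻¹, ?_⟩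
  ext i
  fin_cases i <;> simp [hroot, ht, mul_comm]

theorem exists_eigenvector_lift (hM : IsUnit M.discr) {w : Fin 2 → S}
    (hw : ∃ i, IsUnit (w i)) {μ : S} (hμ : M.map π *ᵥ w = μ • w) :
    ∃ v : Fin 2 → R, (∃ i, v i = 1) ∧ (∃ lam : R, M *ᵥ v = lam • v) ∧
      ∃ u : Sˣ, π ∘ v = (u : S) • w := by
  obtain ⟨i, hi⟩ := hw
  fin_cases i
  · obtain ⟨v, hv, hev, hu⟩ := exists_eigenvector_lift_of_isUnit_zero π hπ hker hM hi hμ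
    exact ⟨v, ⟨0, hv⟩, hev, hu⟩
  · let e := Equiv.swap (0 : Fin 2) 1
    have hMe : IsUnit (M.submatrix e e).discr := by
      convert hM using 1
      simp only [e, discr_fin_two, trace_fin_two, det_submatrix_equiv_self, submatrix_apply,
        Equiv.swap_apply_left, Equiv.swap_apply_right]
      ring
    have hμe : (M.submatrix e e).map π *ᵥ (w ∘ e) = μ • (w ∘ e) := by
      rw [← submatrix_map, submatrix_mulVec_equiv, Function.comp_assoc, Equiv.self_comp_symm,
        Function.comp_id, hμ]
      rfl
    obtain ⟨v, hv, ⟨lam, hlam⟩, u, hu⟩ :=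
      exists_eigenvector_lift_of_isUnit_zero π hπ hker hMe (w := w ∘ e) hi hμe
    refine ⟨v ∘ e, ⟨1, hv⟩, ⟨lam, ?_⟩, u, ?_⟩
    · rw [submatrix_mulVec_equiv, Equiv.symm_swap] at hlam
      funext j
      simpa [e] using congrFun hlam (e j)
    · funext j
      simpa [e] using congrFun hu (e j)

end Matrix

/-- If the characteristic polynomial of the reduction of `γ ∈ GL₂(ℤ/ℓⁿℤ)`
mod `ℓ` has two distinct roots and `w` is a primitive eigenvector of `γ mod ℓ^(n-1)`, then
there is a primitive eigenvector `v` of `γ` reducing to a unit multiple of `w`. -/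
theorem stmt_1 (ℓ n : ℕ) (hℓ : ℓ.Prime) (hn : 2 ≤ n)
    (γ : Matrix.GeneralLinearGroup (Fin 2) (ZMod (ℓ ^ n)))
    (hroots : ∃ μ₁ μ₂ : ZMod ℓ, μ₁ ≠ μ₂ ∧
      ((γ.val.map (ZMod.castHom (dvd_pow_self ℓ (by omega : n ≠ 0)) (ZMod ℓ))).charpoly).IsRoot μ₁ ∧
      ((γ.val.map (ZMod.castHom (dvd_pow_self ℓ (by omega : n ≠ 0)) (ZMod ℓ))).charpoly).IsRoot μ₂)
    (w : Fin 2 → ZMod (ℓ ^ (n - 1)))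
    (hw : IsPrimitive ℓ (ℓ ^ (n - 1)) (dvd_pow_self ℓ (by omega : n - 1 ≠ 0)) w)
    (hwev : ∃ μ : ZMod (ℓ ^ (n - 1)),
      (γ.val.map (ZMod.castHom (pow_dvd_pow ℓ (by omega : n - 1 ≤ n)) (ZMod (ℓ ^ (n - 1))))).mulVec w
        = μ • w) :
    ∃ v : Fin 2 → ZMod (ℓ ^ n),
      IsPrimitive ℓ (ℓ ^ n) (dvd_pow_self ℓ (by omega : n ≠ 0)) v ∧
      (∃ lam : ZMod (ℓ ^ n), γ.val.mulVec v = lam • v) ∧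
      ∃ u : (ZMod (ℓ ^ (n - 1)))ˣ,
        (fun i => ZMod.castHom (pow_dvd_pow ℓ (by omega : n - 1 ≤ n)) (ZMod (ℓ ^ (n - 1))) (v i))
          = (u : ZMod (ℓ ^ (n - 1))) • w := by
  have : Fact ℓ.Prime := ⟨hℓ⟩
  obtain ⟨μ₁, μ₂, hne, h₁, h₂⟩ := hroots
  have hdisc : IsUnit γ.val.discr := by
    refine ZMod.isUnit_of_isUnit_castHom_pow (by omega) ?_
    rw [Matrix.map_discr_fin_two, Matrix.discr_eq_sq_sub_of_isRoot_charpoly hne h₁ h₂]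
    exact (pow_ne_zero 2 (sub_ne_zero.2 hne)).isUnit
  have hwunit : ∃ i, IsUnit (w i) := by
    obtain ⟨i, hi⟩ := Function.ne_iff.1 hw
    exact ⟨i, ZMod.isUnit_of_isUnit_castHom_pow (by omega) (Ne.isUnit hi)⟩
  have hker (x : ZMod (ℓ ^ n)) (hx : ZMod.castHom (pow_dvd_pow ℓ (by omega : n - 1 ≤ n))
      (ZMod (ℓ ^ (n - 1))) x = 0) : x ^ 2 = 0 := by
    refine ZMod.sq_eq_zero_of_castHom_eq_zero _ ?_ hx
    rw [← pow_mul]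
    exact pow_dvd_pow ℓ (by omega)
  obtain ⟨μ, hμ⟩ := hwev
  obtain ⟨v, ⟨i, hvi⟩, hev, u, hu⟩ :=
    Matrix.exists_eigenvector_lift _ (ZMod.ringHom_surjective _) hker hdisc hwunit hμ
  refine ⟨v, fun h => ?_, hev, u, hu⟩
  have hvi' := congrFun h i
  simp only [hvi, map_one, Pi.zero_apply] at hvi'
  exact one_ne_zero hvi'
end

section
/- Let ℓ be an odd prime, n > 2, and γ ∈ GL₂(Z/ℓⁿZ) whose reduction modulo ℓ equals [[1, r],[0, 1]] for some r with ℓ ∤ r. If Δ(γ) is a square in Z/ℓⁿZ, then γ has an eigenvector: there exist a primitive vector v ∈ (Z/ℓⁿZ)² and λ ∈ Z/ℓⁿZ with γ·v = λ·v. -/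
/-- For an odd prime `ℓ`, `n > 2`, and `γ ∈ GL₂(ℤ/ℓⁿℤ)` reducing mod `ℓ`
to `[[1, r],[0, 1]]` with `ℓ ∤ r`: if the discriminant `(tr γ)² - 4 det γ` is a square mod
`ℓⁿ`, then `γ` has a primitive eigenvector. -/
theorem stmt_2 (ℓ n : ℕ) (hℓ : ℓ.Prime) (hℓodd : ℓ ≠ 2) (hn : 2 < n)
    (γ : Matrix.GeneralLinearGroup (Fin 2) (ZMod (ℓ ^ n)))
    (hred : ∃ r : ZMod ℓ, r ≠ 0 ∧
      γ.val.map (ZMod.castHom (dvd_pow_self ℓ (by omega : n ≠ 0)) (ZMod ℓ)) = !![1, r; 0, 1])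
    (hsq : ∃ s : ZMod (ℓ ^ n), (Matrix.trace γ.val) ^ 2 - 4 * γ.val.det = s ^ 2) :
    ∃ (v : Fin 2 → ZMod (ℓ ^ n)) (lam : ZMod (ℓ ^ n)),
      IsPrimitive ℓ (ℓ ^ n) (dvd_pow_self ℓ (by omega : n ≠ 0)) v ∧
      γ.val.mulVec v = lam • v := by
  obtain ⟨r, hr, hmap⟩ := hred
  obtain ⟨s, hs⟩ := hsq
  set a := γ.val 0 0 with ha
  set b := γ.val 0 1 with hb
  set c := γ.val 1 0 with hc
  set d := γ.val 1 1 with hd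
  have hdet : γ.val.det = a * d - b * c := Matrix.det_fin_two _
  have htr : Matrix.trace γ.val = a + d := Matrix.trace_fin_two _
  rw [htr, hdet] at hs
  -- 2 is a unit mod ℓ^n
  have hcop : Nat.Coprime 2 (ℓ ^ n) :=
    Nat.Coprime.pow_right _
      ((Nat.prime_two.coprime_iff_not_dvd).mpr
        (fun h => hℓodd ((Nat.prime_dvd_prime_iff_eq Nat.prime_two hℓ).mp h).symm))
  have h2 : IsUnit (2 : ZMod (ℓ ^ n)) := by
    have h := (ZMod.isUnit_iff_coprime 2 (ℓ ^ n)).mpr hcop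
    norm_num at h
    exact h
  have h2i : (2 : ZMod (ℓ ^ n)) * 2⁻¹ = 1 := ZMod.mul_inv_of_unit _ h2
  obtain ⟨lam, h2lam⟩ : ∃ lam : ZMod (ℓ ^ n), 2 * lam = a + d + s :=
    ⟨(a + d + s) * 2⁻¹, by linear_combination (a + d + s) * h2i⟩
  have h4 : (4 : ZMod (ℓ ^ n)) * (lam ^ 2 - (a + d) * lam + (a * d - b * c)) = 0 := by
    linear_combination (2 * lam - a - d + s) * h2lam - hs
  have hq : lam ^ 2 - (a + d) * lam + (a * d - b * c) = 0 := by
    have h4u : IsUnit (4 : ZMod (ℓ ^ n)) := by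
      have h44 : (4 : ZMod (ℓ ^ n)) = 2 * 2 := by norm_num
      rw [h44]; exact h2.mul h2
    exact (IsUnit.mul_right_eq_zero h4u).mp h4
  refine ⟨![b, lam - a], lam, ?_, ?_⟩
  · -- primitivity: first coordinate reduces to r ≠ 0
    intro h0
    have hb' : ZMod.castHom (dvd_pow_self ℓ (by omega : n ≠ 0)) (ZMod ℓ) b = r := by
      have := congrFun (congrFun hmap 0) 1
      simpa [Matrix.map_apply] using this
    have := congrFun h0 0
    simp at this
    rw [ZMod.castHom_apply] at hb'
    exact hr (hb'.symm.trans this)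
  · funext i
    fin_cases i
    · show γ.val.mulVec ![b, lam - a] 0 = lam * ![b, lam - a] 0
      simp [Matrix.mulVec, dotProduct, Fin.sum_univ_two, ← ha, ← hb]
      ring
    · show γ.val.mulVec ![b, lam - a] 1 = lam * ![b, lam - a] 1
      simp [Matrix.mulVec, dotProduct, Fin.sum_univ_two, ← hc, ← hd]
      linear_combination -hq
end

section
/- Let ℓ be an odd prime, m ≥ 1, n = 2m, and A ∈ GL₂(Z/ℓⁿZ) whose reduction modulo ℓ^{n−1} equals [[a, b],[0, a]] for some a, b with ℓ ∤ b. If Δ(A) is a square in Z/ℓⁿZ, then the lower-left entry of A is 0 in Z/ℓⁿZ, i.e. A is upper triangular. -/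
lemma sq_val_lemma (ℓ m : ℕ) (hℓ : ℓ.Prime) (σ : ℤ)
    (h : (ℓ:ℤ)^(2*m-1) ∣ σ^2) : (ℓ:ℤ)^m ∣ σ := by
  rcases eq_or_ne σ 0 with rfl | hσ
  · simp
  have hn : σ.natAbs ≠ 0 := Int.natAbs_ne_zero.mpr hσ
  have h' : ℓ^(2*m-1) ∣ σ.natAbs^2 := by
    have := Int.natAbs_dvd_natAbs.mpr h
    simpa [Int.natAbs_pow] using this
  have hle : 2*m-1 ≤ (σ.natAbs^2).factorization ℓ :=
    (Nat.Prime.pow_dvd_iff_le_factorization hℓ (pow_ne_zero 2 hn)).mp h'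
  rw [Nat.factorization_pow] at hle
  have hle2 : m ≤ σ.natAbs.factorization ℓ := by
    simp only [Finsupp.smul_apply, smul_eq_mul] at hle; omega
  have hd : ℓ^m ∣ σ.natAbs := (Nat.Prime.pow_dvd_iff_le_factorization hℓ hn).mpr hle2
  have h2 := Int.natCast_dvd_natCast.mpr hd
  rw [Int.dvd_natAbs] at h2
  simpa using h2

lemma cast_eq_imp {N M : ℕ} [NeZero N] (hMN : M ∣ N) (x y : ZMod N)
    (h : ZMod.castHom hMN (ZMod M) x = ZMod.castHom hMN (ZMod M) y) :
    (M:ℤ) ∣ (x.val:ℤ) - (y.val:ℤ) := by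
  have hM : (x.val : ZMod M) = (y.val : ZMod M) := by
    rwa [ZMod.castHom_apply, ZMod.castHom_apply, ← ZMod.natCast_val, ← ZMod.natCast_val] at h
  have h2 := (Nat.modEq_iff_dvd).mp ((ZMod.natCast_eq_natCast_iff _ _ _).mp hM)
  exact (dvd_sub_comm).mp h2

/-- For an odd prime `ℓ`, `m ≥ 1`, `n = 2m`, and `A ∈ GL₂(ℤ/ℓⁿℤ)`
whose reduction mod `ℓ^(n-1)` is `[[a, b],[0, a]]` with `ℓ ∤ b`: if the discriminant
of `A` is a square mod `ℓⁿ`, then the lower-left entry of `A` is `0` in `ℤ/ℓⁿℤ`. -/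
theorem stmt_4 (ℓ m : ℕ) (hℓ : ℓ.Prime) (hℓodd : ℓ ≠ 2) (hm : 1 ≤ m)
    (A : Matrix.GeneralLinearGroup (Fin 2) (ZMod (ℓ ^ (2 * m))))
    (hred : ∃ a b : ZMod (ℓ ^ (2 * m - 1)),
      ZMod.castHom (dvd_pow_self ℓ (by omega : 2 * m - 1 ≠ 0)) (ZMod ℓ) b ≠ 0 ∧
      A.val.map
        (ZMod.castHom (pow_dvd_pow ℓ (by omega : 2 * m - 1 ≤ 2 * m)) (ZMod (ℓ ^ (2 * m - 1))))
        = !![a, b; 0, a])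
    (hsq : ∃ s : ZMod (ℓ ^ (2 * m)),
      (Matrix.trace A.val) ^ 2 - 4 * A.val.det = s ^ 2) :
    A.val 1 0 = 0 := by
  haveI : Fact ℓ.Prime := ⟨hℓ⟩
  haveI : NeZero (ℓ ^ (2*m)) := ⟨pow_ne_zero _ hℓ.ne_zero⟩
  haveI : NeZero (ℓ ^ (2*m-1)) := ⟨pow_ne_zero _ hℓ.ne_zero⟩
  obtain ⟨a, b, hb, hmap⟩ := hred
  obtain ⟨s, hs⟩ := hsq
  set f := ZMod.castHom (pow_dvd_pow ℓ (by omega : 2 * m - 1 ≤ 2 * m)) (ZMod (ℓ ^ (2 * m - 1)))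
    with hf
  have h00 : f (A.val 0 0) = a := by
    have := congrFun (congrFun hmap 0) 0; simpa [Matrix.map_apply] using this
  have h01 : f (A.val 0 1) = b := by
    have := congrFun (congrFun hmap 0) 1; simpa [Matrix.map_apply] using this
  have h10 : f (A.val 1 0) = 0 := by
    have := congrFun (congrFun hmap 1) 0; simpa [Matrix.map_apply] using this
  have h11 : f (A.val 1 1) = a := by
    have := congrFun (congrFun hmap 1) 1; simpa [Matrix.map_apply] using this
  set P : ℤ := ((A.val 0 0).val : ℤ) with hP
  set Q : ℤ := ((A.val 0 1).val : ℤ) with hQdef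
  set R : ℤ := ((A.val 1 0).val : ℤ) with hRdef
  set T : ℤ := ((A.val 1 1).val : ℤ) with hT
  set S : ℤ := ((s.val : ℕ) : ℤ) with hS
  have hR : ((ℓ:ℤ)^(2*m-1)) ∣ R := by
    have := cast_eq_imp (pow_dvd_pow ℓ (by omega : 2 * m - 1 ≤ 2 * m)) (A.val 1 0) 0
      (by rw [← hf, h10]; simp)
    simpa only [ZMod.val_zero, Nat.cast_zero, sub_zero, Nat.cast_pow] using this
  have hPT : ((ℓ:ℤ)^(2*m-1)) ∣ P - T := by
    have := cast_eq_imp (pow_dvd_pow ℓ (by omega : 2 * m - 1 ≤ 2 * m)) (A.val 0 0) (A.val 1 1)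
      (by rw [← hf, h00, h11])
    simpa only [Nat.cast_pow] using this
  -- ℓ does not divide Q
  have hQ : ¬ ((ℓ:ℤ) ∣ Q) := by
    intro hdvd
    apply hb
    rw [← h01]
    have hcomp := DFunLike.congr_fun
      (ZMod.castHom_comp (dvd_pow_self ℓ (by omega : 2 * m - 1 ≠ 0))
        (pow_dvd_pow ℓ (by omega : 2 * m - 1 ≤ 2 * m))) (A.val 0 1)
    rw [RingHom.comp_apply, ← hf] at hcomp
    rw [hcomp, ZMod.castHom_apply, ← ZMod.natCast_val, ZMod.natCast_eq_zero_iff]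
    rw [hQdef] at hdvd
    exact_mod_cast hdvd
  -- the discriminant congruence, over ℤ
  have hE : ((ℓ:ℤ)^(2*m)) ∣ (P+T)^2 - 4*(P*T - Q*R) - S^2 := by
    rw [← Nat.cast_pow]
    apply (ZMod.intCast_zmod_eq_zero_iff_dvd _ _).mp
    push_cast
    rw [Matrix.trace_fin_two, Matrix.det_fin_two] at hs
    simp only [hP, hQdef, hRdef, hT, hS, ZMod.natCast_val, ZMod.intCast_cast, ZMod.cast_id]
    linear_combination hs
  -- integer argument
  have hsq1 : ((ℓ:ℤ)^(2*m)) ∣ (P-T)^2 := by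
    obtain ⟨e, he⟩ := hPT
    refine ⟨ℓ^(2*m-2) * e^2, ?_⟩
    have h2 : (2*m-1) + (2*m-1) = 2*m + (2*m-2) := by omega
    calc (P-T)^2 = (ℓ:ℤ)^((2*m-1)+(2*m-1)) * e^2 := by rw [he, pow_add]; ring
      _ = (ℓ:ℤ)^(2*m+(2*m-2)) * e^2 := by rw [h2]
      _ = (ℓ:ℤ)^(2*m) * ((ℓ:ℤ)^(2*m-2) * e^2) := by rw [pow_add]; ring
  have hE2 : ((ℓ:ℤ)^(2*m)) ∣ 4*Q*R - S^2 := by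
    have := dvd_sub hE hsq1
    have heq : (P+T)^2 - 4*(P*T - Q*R) - S^2 - (P-T)^2 = 4*Q*R - S^2 := by ring
    rwa [heq] at this
  have hMS : ((ℓ:ℤ)^(2*m-1)) ∣ S^2 := by
    have h1 : ((ℓ:ℤ)^(2*m-1)) ∣ 4*Q*R := Dvd.dvd.mul_left hR (4*Q)
    have h2 : ((ℓ:ℤ)^(2*m-1)) ∣ 4*Q*R - S^2 :=
      dvd_trans (pow_dvd_pow _ (by omega)) hE2
    have := dvd_sub h1 h2
    simpa using this
  have hSdvd : ((ℓ:ℤ)^m) ∣ S := sq_val_lemma ℓ m hℓ S hMS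
  have hS2 : ((ℓ:ℤ)^(2*m)) ∣ S^2 := by
    obtain ⟨w, hw⟩ := hSdvd
    exact ⟨w^2, by rw [hw]; rw [two_mul, pow_add]; ring⟩
  have hQR : ((ℓ:ℤ)^(2*m)) ∣ 4*Q*R := by
    have := dvd_add hE2 hS2
    simpa using this
  obtain ⟨u, hu⟩ := hR
  have hcancel : (ℓ:ℤ) ∣ 4*Q*u := by
    have hne : ((ℓ:ℤ)^(2*m-1)) ≠ 0 := pow_ne_zero _ (by exact_mod_cast hℓ.ne_zero)
    have h1 : ((ℓ:ℤ)^(2*m-1)) * (ℓ:ℤ) ∣ ((ℓ:ℤ)^(2*m-1)) * (4*Q*u) := by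
      rw [← pow_succ]
      have : 2*m-1+1 = 2*m := by omega
      rw [this]
      calc ((ℓ:ℤ)^(2*m)) ∣ 4*Q*R := hQR
        _ = (ℓ:ℤ)^(2*m-1) * (4*Q*u) := by rw [hu]; ring
    exact (mul_dvd_mul_iff_left hne).mp h1
  have hℓZ : Prime (ℓ:ℤ) := Nat.prime_iff_prime_int.mp hℓ
  have hu2 : (ℓ:ℤ) ∣ u := by
    rcases hℓZ.dvd_mul.mp hcancel with h | h
    · rcases hℓZ.dvd_mul.mp h with h4 | hq
      · exfalso
        have : (ℓ:ℤ) ∣ 2^2 := by norm_num at h4 ⊢; exact_mod_cast h4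
        have := hℓZ.dvd_of_dvd_pow this
        have : ℓ ∣ 2 := by exact_mod_cast this
        exact hℓodd ((Nat.prime_dvd_prime_iff_eq hℓ Nat.prime_two).mp this)
      · exact absurd hq hQ
    · exact h
  have hfinal : ((ℓ:ℤ)^(2*m)) ∣ R := by
    obtain ⟨v, hv⟩ := hu2
    refine ⟨v, ?_⟩
    calc R = (ℓ:ℤ)^(2*m-1) * ((ℓ:ℤ)*v) := by rw [hu, hv]
      _ = (ℓ:ℤ)^((2*m-1)+1) * v := by rw [pow_succ]; ring
      _ = (ℓ:ℤ)^(2*m) * v := by congr 2; omega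
  -- conclude
  have hnat : ℓ^(2*m) ∣ (A.val 1 0).val := by
    have : ((ℓ^(2*m) : ℕ) : ℤ) ∣ (((A.val 1 0).val : ℕ) : ℤ) := by push_cast; exact hfinal
    exact_mod_cast this
  have := (ZMod.natCast_eq_zero_iff _ _).mpr hnat
  rwa [ZMod.natCast_val, ZMod.cast_id] at this
end

section
/- Let ℓ be an odd prime, m ≥ 1, and X ∈ GL₂(Z/ℓ^{2m+1}Z) whose lower-left entry is divisible by ℓ^{2m}. Then there exists a primitive vector v ∈ (Z/ℓ^{2m+1}Z)² that is a simultaneous eigenvector of X and of every element of 𝕂(ℓ^{2m+1}) if and only if the two diagonal entries of X are congruent modulo ℓ^m and, writing X = [[a + ℓ^m·x, b],[ℓ^{2m}·z, a + ℓ^m·w]] with integers a, x, b, z, w, one has (x − w) ≡ (z − b) (mod ℓ) or (x − w) ≡ −(z − b) (mod ℓ). -/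
/-- Membership in the group `𝕂(ℓ^(2m+1))`: matrices `[[r, s],[ℓ^(2m)·s, t]]` with
`r ≡ t (mod ℓ^(2m))`. -/
def Kmem (ℓ m : ℕ) (g : Matrix (Fin 2) (Fin 2) (ZMod (ℓ ^ (2 * m + 1)))) : Prop :=
  ∃ r s t : ZMod (ℓ ^ (2 * m + 1)),
    g = !![r, s; (ℓ : ZMod (ℓ ^ (2 * m + 1))) ^ (2 * m) * s, t] ∧
    ZMod.castHom (pow_dvd_pow ℓ (by omega : 2 * m ≤ 2 * m + 1)) (ZMod (ℓ ^ (2 * m))) r =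
      ZMod.castHom (pow_dvd_pow ℓ (by omega : 2 * m ≤ 2 * m + 1)) (ZMod (ℓ ^ (2 * m))) t

namespace Matrix

variable {R : Type*} [CommRing R]

theorem exists_mulVec_vecCons_one_eq_smul_iff (M : Matrix (Fin 2) (Fin 2) R) (u : R) :
    (∃ lam : R, M *ᵥ ![1, u] = lam • ![1, u]) ↔ M 1 0 + M 1 1 * u = (M 0 0 + M 0 1 * u) * u := by
  simp only [mulVec_fin_two, smul_cons, smul_eq_mul, smul_empty, mul_one, cons_val_zero,
    cons_val_one, vecCons_inj, and_true]
  constructor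
  · rintro ⟨lam, h0, h1⟩
    rw [h1, h0]
  · intro h
    exact ⟨_, rfl, h⟩

theorem exists_mulVec_smul_eq_smul_iff (M : Matrix (Fin 2) (Fin 2) R) {c : R} (hc : IsUnit c)
    (w : Fin 2 → R) :
    (∃ lam : R, M *ᵥ (c • w) = lam • c • w) ↔ ∃ lam : R, M *ᵥ w = lam • w := by
  simp only [mulVec_smul, smul_comm _ c, hc.smul_left_cancel]

theorem eq_smul_vecCons_one_of_mulVec_eq_smul {M : Matrix (Fin 2) (Fin 2) R} (h01 : M 0 1 = 1)
    {v : Fin 2 → R} {lam : R} (h : M *ᵥ v = lam • v) : v = v 0 • ![1, lam - M 0 0] := by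
  have h0 := congrFun h 0
  simp only [mulVec_fin_two, h01, cons_val_zero, Pi.smul_apply, smul_eq_mul] at h0
  ext i
  fin_cases i
  · simp
  · simp only [Fin.mk_one, Pi.smul_apply, cons_val_one, cons_val_zero, smul_eq_mul]
    linear_combination h0

end Matrix

namespace ZMod

theorem natCast_self_pow_eq_zero {p n k : ℕ} (h : n ≤ k) : (p : ZMod (p ^ n)) ^ k = 0 := by
  rw [← Nat.cast_pow, natCast_eq_zero_iff]
  exact pow_dvd_pow p h

theorem isUnit_of_castHom_ne_zero {p d : ℕ} (hp : p.Prime) (h : p ∣ p ^ d) {x : ZMod (p ^ d)}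
    (hx : castHom h (ZMod p) x ≠ 0) : IsUnit x := by
  have hd : 0 < d := Nat.pos_of_ne_zero (by rintro rfl; exact hp.not_dvd_one h)
  have : NeZero (p ^ d) := ⟨pow_ne_zero d hp.ne_zero⟩
  obtain ⟨n, rfl⟩ := natCast_zmod_surjective x
  rw [map_natCast, Ne, natCast_eq_zero_iff] at hx
  exact (isUnit_natCast_iff_not_dvd_pow hp hd).mpr hx

theorem exists_sub_eq_mul_of_castHom_eq {n N : ℕ} (h : n ∣ N) {a b : ZMod N}
    (hab : castHom h (ZMod n) a = castHom h (ZMod n) b) : ∃ d : ZMod N, b - a = n * d := by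
  obtain ⟨A, rfl⟩ := intCast_surjective a
  obtain ⟨B, rfl⟩ := intCast_surjective b
  rw [map_intCast, map_intCast, intCast_eq_intCast_iff_dvd_sub] at hab
  obtain ⟨d, hd⟩ := hab
  exact ⟨d, by rw [← Int.cast_sub, hd]; push_cast; rfl⟩

end ZMod

namespace Int

variable {p : ℤ}

theorem exists_eq_pow_mul_of_pow_succ_dvd_sq_sub (hp : Prime p) (m : ℕ) {U : ℤ}
    (h : p ^ (2 * m + 1) ∣ U ^ 2 - p ^ (2 * m)) : ∃ E, U = p ^ m * E ∧ p ∣ E ^ 2 - 1 := by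
  have hsq : (p ^ m) ^ 2 ∣ U ^ 2 := by
    rw [← pow_mul, mul_comm]
    exact dvd_sub_self_right.mp ((pow_dvd_pow p (Nat.le_succ _)).trans h)
  obtain ⟨E, rfl⟩ := (Int.pow_dvd_pow_iff two_ne_zero).mp hsq
  refine ⟨E, rfl, ?_⟩
  rw [pow_succ, show (p ^ m * E) ^ 2 - p ^ (2 * m) = p ^ (2 * m) * (E ^ 2 - 1) by ring] at h
  exact (mul_dvd_mul_iff_left (pow_ne_zero _ hp.ne_zero)).mp h

theorem exists_eq_pow_mul_of_pow_succ_dvd_mul_sub (hp : Prime p) (m : ℕ) {E Δ K : ℤ}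
    (hE : p ∣ E ^ 2 - 1) (h : p ^ (2 * m + 1) ∣ Δ * (p ^ m * E) - p ^ (2 * m) * K) :
    ∃ δ, Δ = p ^ m * δ ∧ (δ ≡ K [ZMOD p] ∨ δ ≡ -K [ZMOD p]) := by
  have hpm : p ^ m ≠ 0 := pow_ne_zero m hp.ne_zero
  have h' : p ^ m * p ^ (m + 1) ∣ p ^ m * (Δ * E - p ^ m * K) := by
    rw [← pow_add]
    convert h using 1 <;> ring_nf
  replace h' := (mul_dvd_mul_iff_left hpm).mp h'
  have hE' : IsCoprime (p ^ m) E := by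
    refine (hp.coprime_iff_not_dvd.mpr fun hpE => hp.not_dvd_one ?_).pow_left
    exact (dvd_sub_right (dvd_pow hpE two_ne_zero)).mp hE
  obtain ⟨δ, rfl⟩ : p ^ m ∣ Δ := by
    refine hE'.dvd_of_dvd_mul_right ?_
    exact (dvd_sub_left (dvd_mul_right _ K)).mp ((pow_dvd_pow p m.le_succ).trans h')
  refine ⟨δ, rfl, ?_⟩
  rw [pow_succ, show p ^ m * δ * E - p ^ m * K = p ^ m * (δ * E - K) by ring] at h'
  have hδ : p ∣ (δ - K) * (δ + K) := by
    have := (mul_dvd_mul_iff_left hpm).mp h'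
    obtain ⟨k₁, hk₁⟩ := hE
    obtain ⟨k₂, hk₂⟩ := this
    exact ⟨k₂ * (δ * E + K) - δ ^ 2 * k₁, by linear_combination hk₂ * (δ * E + K) - δ ^ 2 * hk₁⟩
  simp only [Int.modEq_iff_dvd]
  rcases hp.dvd_or_dvd hδ with h | h
  · exact Or.inl (dvd_sub_comm.mp h)
  · exact Or.inr (by rw [show -K - δ = -(δ + K) by ring]; exact h.neg_right)

end Int

open Matrix

section

variable {ℓ m : ℕ}

theorem exists_eq_pow_mul_of_intCast_sq_eq (hℓ : ℓ.Prime) {U : ℤ}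
    (hU : (U : ZMod (ℓ ^ (2 * m + 1))) ^ 2 = (ℓ : ZMod (ℓ ^ (2 * m + 1))) ^ (2 * m)) :
    ∃ E, U = ℓ ^ m * E ∧ (ℓ : ℤ) ∣ E ^ 2 - 1 := by
  refine Int.exists_eq_pow_mul_of_pow_succ_dvd_sq_sub (Nat.prime_iff_prime_int.mp hℓ) m ?_
  rw [← Nat.cast_pow, ← ZMod.intCast_zmod_eq_zero_iff_dvd]
  push_cast
  rw [hU, sub_self]

theorem pow_mul_eq_zero_of_sq_eq (hℓ : ℓ.Prime) (hm : 1 ≤ m) {u : ZMod (ℓ ^ (2 * m + 1))}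
    (hu : u ^ 2 = (ℓ : ZMod (ℓ ^ (2 * m + 1))) ^ (2 * m)) :
    (ℓ : ZMod (ℓ ^ (2 * m + 1))) ^ (2 * m) * u = 0 := by
  obtain ⟨U, rfl⟩ := ZMod.intCast_surjective u
  obtain ⟨E, rfl, -⟩ := exists_eq_pow_mul_of_intCast_sq_eq hℓ hu
  push_cast
  rw [← mul_assoc, ← pow_add, ZMod.natCast_self_pow_eq_zero (by omega), zero_mul]

theorem exists_mulVec_eq_smul_of_Kmem_of_sq_eq (hℓ : ℓ.Prime) (hm : 1 ≤ m)
    {u : ZMod (ℓ ^ (2 * m + 1))} (hu : u ^ 2 = (ℓ : ZMod (ℓ ^ (2 * m + 1))) ^ (2 * m))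
    {g : Matrix (Fin 2) (Fin 2) (ZMod (ℓ ^ (2 * m + 1)))} (hg : Kmem ℓ m g) :
    ∃ lam : ZMod (ℓ ^ (2 * m + 1)), g *ᵥ ![1, u] = lam • ![1, u] := by
  obtain ⟨r, s, t, rfl, hrt⟩ := hg
  obtain ⟨d, hd⟩ := ZMod.exists_sub_eq_mul_of_castHom_eq _ hrt
  rw [exists_mulVec_vecCons_one_eq_smul_iff]
  simp only [of_apply, cons_val', cons_val_zero, cons_val_one, empty_val', cons_val_fin_one]
  push_cast at hd
  linear_combination u * hd - s * hu + d * pow_mul_eq_zero_of_sq_eq hℓ hm hu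

theorem exists_isUnit_and_sq_eq_of_forall_Kmem (hℓ : ℓ.Prime) (hm : 1 ≤ m)
    {h : ℓ ∣ ℓ ^ (2 * m + 1)} {v : Fin 2 → ZMod (ℓ ^ (2 * m + 1))}
    (hv : IsPrimitive ℓ (ℓ ^ (2 * m + 1)) h v)
    (hK : ∀ g : GL (Fin 2) (ZMod (ℓ ^ (2 * m + 1))),
      Kmem ℓ m g.val → ∃ lam : ZMod (ℓ ^ (2 * m + 1)), g.val *ᵥ v = lam • v) :
    ∃ c u : ZMod (ℓ ^ (2 * m + 1)),
      IsUnit c ∧ u ^ 2 = (ℓ : ZMod (ℓ ^ (2 * m + 1))) ^ (2 * m) ∧ v = c • ![1, u] := by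
  set q := (ℓ : ZMod (ℓ ^ (2 * m + 1))) ^ (2 * m)
  have hq : IsNilpotent q := ⟨2, by rw [← pow_mul, ZMod.natCast_self_pow_eq_zero (by omega)]⟩
  have hg₀ : IsUnit !![1, 1; q, 1] := by
    rw [isUnit_iff_isUnit_det, det_fin_two_of, one_mul, one_mul]
    exact hq.isUnit_one_sub
  obtain ⟨lam, hlam⟩ := hK hg₀.unit ⟨1, 1, 1, by simp [q], rfl⟩
  have hv₀ : v = v 0 • ![1, lam - 1] :=
    eq_smul_vecCons_one_of_mulVec_eq_smul (M := !![1, 1; q, 1]) rfl hlam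
  have hunit : IsUnit (v 0) := by
    refine ZMod.isUnit_of_castHom_ne_zero hℓ h fun h₀ => hv ?_
    ext i
    rw [hv₀]
    simp only [Pi.smul_apply, smul_eq_mul, map_mul, h₀, zero_mul, Pi.zero_apply]
  refine ⟨v 0, lam - 1, hunit, ?_, hv₀⟩
  rw [hv₀] at hlam
  have := (exists_mulVec_vecCons_one_eq_smul_iff !![1, 1; q, 1] (lam - 1)).mp
    ((exists_mulVec_smul_eq_smul_iff _ hunit _).mp ⟨lam, hlam⟩)
  simp only [of_apply, cons_val', cons_val_zero, cons_val_one, empty_val', cons_val_fin_one] at this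
  linear_combination -this

theorem exists_sq_eq_and_mulVec_eq_smul_iff (hℓ : ℓ.Prime)
    (X : Matrix (Fin 2) (Fin 2) (ZMod (ℓ ^ (2 * m + 1)))) {c : ZMod (ℓ ^ (2 * m + 1))}
    (hc : X 1 0 = (ℓ : ZMod (ℓ ^ (2 * m + 1))) ^ (2 * m) * c) :
    (∃ u : ZMod (ℓ ^ (2 * m + 1)), u ^ 2 = (ℓ : ZMod (ℓ ^ (2 * m + 1))) ^ (2 * m) ∧
      ∃ lam : ZMod (ℓ ^ (2 * m + 1)), X *ᵥ ![1, u] = lam • ![1, u]) ↔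
    (ZMod.castHom (pow_dvd_pow ℓ (by omega : m ≤ 2 * m + 1)) (ZMod (ℓ ^ m)) (X 0 0) =
        ZMod.castHom (pow_dvd_pow ℓ (by omega : m ≤ 2 * m + 1)) (ZMod (ℓ ^ m)) (X 1 1) ∧
      ∃ a x b z w : ℤ,
        X = !![(a : ZMod (ℓ ^ (2 * m + 1))) +
                (ℓ : ZMod (ℓ ^ (2 * m + 1))) ^ m * (x : ZMod (ℓ ^ (2 * m + 1))),
              (b : ZMod (ℓ ^ (2 * m + 1)));
              (ℓ : ZMod (ℓ ^ (2 * m + 1))) ^ (2 * m) * (z : ZMod (ℓ ^ (2 * m + 1))),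
              (a : ZMod (ℓ ^ (2 * m + 1))) +
                (ℓ : ZMod (ℓ ^ (2 * m + 1))) ^ m * (w : ZMod (ℓ ^ (2 * m + 1)))] ∧
        (x - w ≡ z - b [ZMOD (ℓ : ℤ)] ∨ x - w ≡ -(z - b) [ZMOD (ℓ : ℤ)])) := by
  constructor
  · rintro ⟨u, hu, hX⟩
    obtain ⟨U, rfl⟩ := ZMod.intCast_surjective u
    obtain ⟨A, hA⟩ := ZMod.intCast_surjective (X 0 0)
    obtain ⟨B, hB⟩ := ZMod.intCast_surjective (X 0 1)
    obtain ⟨C, rfl⟩ := ZMod.intCast_surjective c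
    obtain ⟨D, hD⟩ := ZMod.intCast_surjective (X 1 1)
    rw [exists_mulVec_vecCons_one_eq_smul_iff, hc, ← hA, ← hB, ← hD] at hX
    have hXd : (ℓ : ℤ) ^ (2 * m + 1) ∣ (A - D) * U - ℓ ^ (2 * m) * (C - B) := by
      rw [← Nat.cast_pow, ← ZMod.intCast_zmod_eq_zero_iff_dvd]
      push_cast
      linear_combination -hX - (B : ZMod (ℓ ^ (2 * m + 1))) * hu
    obtain ⟨E, rfl, hE⟩ := exists_eq_pow_mul_of_intCast_sq_eq hℓ hu
    obtain ⟨δ, hδ, hsign⟩ := Int.exists_eq_pow_mul_of_pow_succ_dvd_mul_sub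
      (Nat.prime_iff_prime_int.mp hℓ) m hE hXd
    obtain rfl : D = A + ℓ ^ m * -δ := by linear_combination -hδ
    refine ⟨?_, A, 0, B, C, -δ, ?_, by simpa using hsign⟩
    · rw [← hA, ← hD, map_intCast, map_intCast, ZMod.intCast_eq_intCast_iff_dvd_sub]
      exact ⟨-δ, by push_cast; ring⟩
    · rw [eta_fin_two X, ← hA, ← hB, hc, ← hD]
      push_cast
      simp
  · rintro ⟨-, a, x, b, z, w, hX, hsign⟩
    obtain ⟨ε, hε, k, hk⟩ : ∃ ε : ℤ, ε ^ 2 = 1 ∧ ∃ k, z - b - ε * (x - w) = ℓ * k := by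
      simp only [Int.modEq_iff_dvd] at hsign
      rcases hsign with ⟨k, hk⟩ | ⟨k, hk⟩
      · exact ⟨1, by norm_num, k, by linear_combination hk⟩
      · exact ⟨-1, by norm_num, -k, by linear_combination -hk⟩
    have hεR := congrArg (Int.cast : ℤ → ZMod (ℓ ^ (2 * m + 1))) hε
    have hkR := congrArg (Int.cast : ℤ → ZMod (ℓ ^ (2 * m + 1))) hk
    push_cast at hεR hkR
    refine ⟨ε * ℓ ^ m, by linear_combination (ℓ : ZMod (ℓ ^ (2 * m + 1))) ^ (2 * m) * hεR, ?_⟩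
    rw [exists_mulVec_vecCons_one_eq_smul_iff, hX]
    simp only [of_apply, cons_val', cons_val_zero, cons_val_one, empty_val', cons_val_fin_one]
    linear_combination (ℓ : ZMod (ℓ ^ (2 * m + 1))) ^ (2 * m) * hkR
      - (b : ZMod (ℓ ^ (2 * m + 1))) * (ℓ : ZMod (ℓ ^ (2 * m + 1))) ^ (2 * m) * hεR
      + (k : ZMod (ℓ ^ (2 * m + 1))) * ZMod.natCast_self_pow_eq_zero (p := ℓ) le_rfl

end

/-- Let `X ∈ GL₂(ℤ/ℓ^(2m+1)ℤ)` have lower-left entry divisible by `ℓ^(2m)`.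
There is a primitive simultaneous eigenvector of `X` and of all of `𝕂(ℓ^(2m+1))` iff the
diagonal entries of `X` agree mod `ℓ^m` and, writing
`X = [[a + ℓ^m x, b],[ℓ^(2m) z, a + ℓ^m w]]`, one has `x - w ≡ ±(z - b) (mod ℓ)`. -/
theorem stmt_6 (ℓ m : ℕ) (hℓ : ℓ.Prime) (hm : 1 ≤ m)
    (X : Matrix.GeneralLinearGroup (Fin 2) (ZMod (ℓ ^ (2 * m + 1))))
    (hlow : ∃ c : ZMod (ℓ ^ (2 * m + 1)),
      X.val 1 0 = (ℓ : ZMod (ℓ ^ (2 * m + 1))) ^ (2 * m) * c) :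
    (∃ v : Fin 2 → ZMod (ℓ ^ (2 * m + 1)),
      IsPrimitive ℓ (ℓ ^ (2 * m + 1)) (dvd_pow_self ℓ (by omega : 2 * m + 1 ≠ 0)) v ∧
      (∃ lam : ZMod (ℓ ^ (2 * m + 1)), X.val.mulVec v = lam • v) ∧
      (∀ g : Matrix.GeneralLinearGroup (Fin 2) (ZMod (ℓ ^ (2 * m + 1))),
        Kmem ℓ m g.val → ∃ lam : ZMod (ℓ ^ (2 * m + 1)), g.val.mulVec v = lam • v)) ↔
    (ZMod.castHom (pow_dvd_pow ℓ (by omega : m ≤ 2 * m + 1)) (ZMod (ℓ ^ m)) (X.val 0 0) =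
        ZMod.castHom (pow_dvd_pow ℓ (by omega : m ≤ 2 * m + 1)) (ZMod (ℓ ^ m)) (X.val 1 1) ∧
      ∃ a x b z w : ℤ,
        X.val = !![(a : ZMod (ℓ ^ (2 * m + 1))) + (ℓ : ZMod (ℓ ^ (2 * m + 1))) ^ m * (x : ZMod (ℓ ^ (2 * m + 1))),
            (b : ZMod (ℓ ^ (2 * m + 1)));
            (ℓ : ZMod (ℓ ^ (2 * m + 1))) ^ (2 * m) * (z : ZMod (ℓ ^ (2 * m + 1))),
            (a : ZMod (ℓ ^ (2 * m + 1))) + (ℓ : ZMod (ℓ ^ (2 * m + 1))) ^ m * (w : ZMod (ℓ ^ (2 * m + 1)))] ∧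
        (x - w ≡ z - b [ZMOD (ℓ : ℤ)] ∨ x - w ≡ -(z - b) [ZMOD (ℓ : ℤ)])) := by
  obtain ⟨c, hc⟩ := hlow
  rw [← exists_sq_eq_and_mulVec_eq_smul_iff hℓ X.val hc]
  constructor
  · rintro ⟨v, hv, hX, hK⟩
    obtain ⟨a, u, ha, hu, rfl⟩ := exists_isUnit_and_sq_eq_of_forall_Kmem hℓ hm hv hK
    exact ⟨u, hu, (exists_mulVec_smul_eq_smul_iff _ ha _).mp hX⟩
  · rintro ⟨u, hu, hX⟩
    refine ⟨![1, u], fun h => ?_, hX, fun _ => exists_mulVec_eq_smul_of_Kmem_of_sq_eq hℓ hm hu⟩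
    have := Fact.mk hℓ
    simpa using congrFun h 0
end

section
/- Let ℓ be an odd prime, m ≥ 2, and 0 < j < m. Let Y ∈ GL₂(Z/ℓ^{2m+1}Z) be of the form Y = [[a + ℓʲ·x, b],[ℓ^{2m}·z, a + ℓʲ·w]] for integers a, x, b, z, w. If for every natural number k and every R ∈ 𝕂(ℓ^{2m+1}) the discriminant Δ(Yᵏ·R) is a square in Z/ℓ^{2m+1}Z, then x ≡ w (mod ℓ), i.e. the diagonal entries of Y are congruent modulo ℓ^{j+1}. -/
def lucasU {R : Type*} [CommRing R] (P Q : R) : ℕ → R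
  | 0 => 0
  | 1 => 1
  | n + 2 => P * lucasU P Q (n + 1) - Q * lucasU P Q n

namespace lucasU

variable {R : Type*} [CommRing R]

@[simp] lemma zero (P Q : R) : lucasU P Q 0 = 0 := rfl

@[simp] lemma one (P Q : R) : lucasU P Q 1 = 1 := rfl

lemma add_two (P Q : R) (n : ℕ) :
    lucasU P Q (n + 2) = P * lucasU P Q (n + 1) - Q * lucasU P Q n := rfl

lemma sub_mul_eq_pow_sub_pow (x y : R) (k : ℕ) :
    (x - y) * lucasU (x + y) (x * y) k = x ^ k - y ^ k := by
  induction k using Nat.twoStepInduction with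
  | zero => simp
  | one => simp
  | more n ih₀ ih₁ =>
    rw [add_two]
    linear_combination (x + y) * ih₁ - x * y * ih₀

lemma sub_dvd_sub (P Q Q' : R) (k : ℕ) : Q - Q' ∣ lucasU P Q k - lucasU P Q' k := by
  induction k using Nat.twoStepInduction with
  | zero => simp
  | one => simp
  | more n ih₀ ih₁ =>
    obtain ⟨e₀, he₀⟩ := ih₀
    obtain ⟨e₁, he₁⟩ := ih₁
    refine ⟨P * e₁ - Q * e₀ - lucasU P Q' n, ?_⟩
    rw [add_two, add_two]
    linear_combination P * he₁ - Q * he₀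

lemma sq_sub_mul_add_mul_sq (P Q : R) (k : ℕ) :
    lucasU P Q (k + 1) ^ 2 - P * lucasU P Q (k + 1) * lucasU P Q k + Q * lucasU P Q k ^ 2
      = Q ^ k := by
  induction k with
  | zero => simp
  | succ n ih =>
    rw [add_two, pow_succ]
    linear_combination Q * ih

end lucasU

namespace Matrix

variable {R : Type*} [CommRing R]

lemma sq_eq_trace_smul_sub_det_smul (M : Matrix (Fin 2) (Fin 2) R) :
    M ^ 2 = M.trace • M - M.det • 1 := by
  rw [M.eta_fin_two, sq]
  ext i j
  fin_cases i <;> fin_cases j <;> simp [trace_fin_two] <;> ring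

lemma pow_succ_eq_lucasU (M : Matrix (Fin 2) (Fin 2) R) (k : ℕ) :
    M ^ (k + 1) = lucasU M.trace M.det (k + 1) • M - (M.det * lucasU M.trace M.det k) • 1 := by
  induction k with
  | zero => simp
  | succ n ih =>
    rw [pow_succ, ih, sub_mul, smul_mul, ← sq, sq_eq_trace_smul_sub_det_smul, smul_mul, one_mul,
      lucasU.add_two]
    module

end Matrix

lemma RingHom.map_discr_fin_two {R S : Type*} [CommRing R] [CommRing S] (f : R →+* S)
    (M : Matrix (Fin 2) (Fin 2) R) : f M.discr = (f.mapMatrix M).discr := by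
  simp [Matrix.discr_fin_two, RingHom.map_det, Matrix.trace_fin_two, map_ofNat]

lemma Int.exists_pow_sub_pow_eq_prime_pow_mul {p : ℕ} (hp : p.Prime) (hp2 : p ≠ 2)
    {x y v : ℤ} {j : ℕ} (hj : 0 < j) (hxy : x - y = p ^ j * v) (hv : ¬ (p : ℤ) ∣ v)
    (hx : ¬ (p : ℤ) ∣ x) {c : ℕ} (hc : ¬ p ∣ c) (n : ℕ) :
    ∃ t, x ^ (c * p ^ n) - y ^ (c * p ^ n) = p ^ (j + n) * t ∧ ¬ (p : ℤ) ∣ t := by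
  have hp' : Prime (p : ℤ) := Nat.prime_iff_prime_int.mp hp
  have hsub : emultiplicity (p : ℤ) (x - y) = j := by
    refine emultiplicity_eq_coe.mpr ⟨hxy ▸ dvd_mul_right _ _, ?_⟩
    rw [hxy, pow_succ, mul_dvd_mul_iff_left (pow_ne_zero _ hp'.ne_zero)]
    exact hv
  have hexp : emultiplicity p (c * p ^ n) = n := by
    refine emultiplicity_eq_coe.mpr ⟨dvd_mul_left _ _, ?_⟩
    rw [pow_succ', Nat.mul_dvd_mul_iff_right (pow_pos hp.pos _)]
    exact hc
  have hpxy : (p : ℤ) ∣ x - y := hxy ▸ (dvd_pow_self _ hj.ne').mul_right v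
  have hLTE := Int.emultiplicity_pow_sub_pow hp (hp.odd_of_ne_two hp2) hpxy hx (c * p ^ n)
  rw [hsub, hexp, ← Nat.cast_add] at hLTE
  obtain ⟨⟨t, ht⟩, hnot⟩ := emultiplicity_eq_coe.mp hLTE
  refine ⟨t, ht, fun ⟨e, he⟩ => hnot ⟨e, ?_⟩⟩
  rw [ht, he, pow_succ]
  ring

lemma Int.sq_modEq_sq_of_dvd_of_modEq {n x y : ℤ} {m : ℕ} (hy : n ^ m ∣ y)
    (hxy : x ≡ y [ZMOD n ^ (m + 1)]) : x ^ 2 ≡ y ^ 2 [ZMOD n ^ (2 * m + 1)] := by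
  have hdiff : n ^ (m + 1) ∣ x - y := hxy.symm.dvd
  have hsum : n ^ m ∣ x + y := by
    rw [show x + y = (x - y) + 2 * y by ring]
    exact dvd_add ((pow_dvd_pow _ m.le_succ).trans hdiff) (hy.mul_left 2)
  refine (Int.modEq_iff_dvd.mpr ?_).symm
  rw [show x ^ 2 - y ^ 2 = (x - y) * (x + y) by ring, show 2 * m + 1 = (m + 1) + m by ring,
    pow_add]
  exact mul_dvd_mul hdiff hsum

lemma Int.not_sq_modEq_pow_mul {p : ℕ} (hp : p ≠ 0) {N : ℤ}
    (hN : ¬ IsSquare (N : ZMod p)) (m : ℕ) (σ : ℤ) :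
    ¬ σ ^ 2 ≡ p ^ (2 * m) * N [ZMOD p ^ (2 * m + 1)] := by
  intro h
  have hp0 : (p : ℤ) ^ (2 * m) ≠ 0 := pow_ne_zero _ (by exact_mod_cast hp)
  obtain ⟨d, rfl⟩ : (p : ℤ) ^ m ∣ σ := by
    rw [← Int.pow_dvd_pow_iff two_ne_zero, ← pow_mul, mul_comm m]
    exact ((h.of_dvd (pow_dvd_pow _ (2 * m).le_succ)).dvd_iff).mpr (dvd_mul_right _ _)
  rw [mul_pow, ← pow_mul, mul_comm m, pow_succ] at h
  have hdvd : (p : ℤ) ∣ N - d ^ 2 := by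
    have := h.dvd
    rwa [← mul_sub, mul_dvd_mul_iff_left hp0] at this
  refine hN ⟨d, ?_⟩
  have := (ZMod.intCast_zmod_eq_zero_iff_dvd _ p).mpr hdvd
  push_cast at this
  rw [sub_eq_zero] at this
  rw [this, sq]

lemma Int.not_dvd_of_isUnit_intCast {p k : ℕ} (hp : 1 < p) (hk : k ≠ 0) {y : ℤ}
    (h : IsUnit (y : ZMod (p ^ k))) : ¬ (p : ℤ) ∣ y := by
  have := Fact.mk hp
  intro hdvd
  have h' := h.map (ZMod.castHom (dvd_pow_self p hk) (ZMod p))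
  rw [map_intCast, (ZMod.intCast_zmod_eq_zero_iff_dvd y p).mpr hdvd] at h'
  exact not_isUnit_zero h'

lemma ZMod.exists_not_isSquare_one_add_sq {p : ℕ} [Fact p.Prime] (hp2 : p ≠ 2) :
    ∃ c : ZMod p, ¬ IsSquare (1 + c ^ 2) := by
  by_contra! h
  have hnat : ∀ n : ℕ, IsSquare (n : ZMod p) := by
    intro n
    induction n with
    | zero => exact ⟨0, by simp⟩
    | succ n ih =>
      obtain ⟨r, hr⟩ := ih
      simpa [hr, sq, add_comm] using h r
  obtain ⟨a, ha⟩ := FiniteField.exists_nonsquare (F := ZMod p) (by rwa [ZMod.ringChar_zmod_n])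
  exact ha (ZMod.natCast_zmod_val a ▸ hnat a.val)

lemma ZMod.exists_not_isSquare_sq_add_mul_sq {p : ℕ} [Fact p.Prime] (hp2 : p ≠ 2)
    {μ e : ZMod p} (hμ : μ ≠ 0) (he : e ≠ 0) : ∃ s, ¬ IsSquare (μ ^ 2 + (e * s) ^ 2) := by
  obtain ⟨c, hc⟩ := exists_not_isSquare_one_add_sq hp2
  refine ⟨c * μ / e, fun hsq => hc ?_⟩
  have : μ ^ 2 + (e * (c * μ / e)) ^ 2 = μ ^ 2 * (1 + c ^ 2) := by field_simp
  rw [this] at hsq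
  obtain ⟨r, hr⟩ := hsq
  exact ⟨r / μ, by field_simp; linear_combination hr⟩

open Matrix in
lemma discr_pow_mul_modEq {A b z D L s : ℤ} {M : Matrix (Fin 2) (Fin 2) ℤ}
    (hM : M = !![A, b; L * z, D]) {K : ℕ} (hK : K ≠ 0) :
    (M ^ K * !![1, s; L * s, 1]).discr ≡
      (lucasU M.trace M.det K * (A - D)) ^ 2 + 4 * L * M.det ^ K * s ^ 2
        [ZMOD lucasU M.trace M.det K * L] := by
  obtain ⟨k, rfl⟩ := Nat.exists_eq_add_one_of_ne_zero hK
  have hnorm := lucasU.sq_sub_mul_add_mul_sq M.trace M.det k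
  have htr : (M ^ (k + 1) * !![1, s; L * s, 1]).trace =
      lucasU M.trace M.det (k + 1) * (A + D + L * s * (b + z)) -
        2 * M.det * lucasU M.trace M.det k := by
    rw [pow_succ_eq_lucasU, sub_mul, smul_mul, smul_mul, one_mul, trace_sub, trace_smul,
      trace_smul, hM]
    simp [trace_fin_two]
    ring
  have hdet : (M ^ (k + 1) * !![1, s; L * s, 1]).det = M.det ^ (k + 1) * (1 - L * s ^ 2) := by
    rw [det_mul, det_pow, det_fin_two_of]
    ring
  have hT : M.trace = A + D := by simp [hM, trace_fin_two]
  have hδ : M.det = A * D - b * (L * z) := by rw [hM, det_fin_two_of]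
  rw [discr_fin_two, htr, hdet]
  rw [hT, hδ] at hnorm ⊢
  generalize lucasU (A + D) (A * D - b * (L * z)) (k + 1) = u at hnorm ⊢
  generalize lucasU (A + D) (A * D - b * (L * z)) k = u' at hnorm ⊢
  -- By `hnorm`, `Δ(M^(k+1)) = u² Δ(M)`; every other term of the difference carries `u L`.
  refine (Int.modEq_iff_dvd.mpr ⟨4 * b * z * u +
    2 * (u * (A + D) - 2 * (A * D - b * (L * z)) * u') * s * (b + z) +
    u * L * s ^ 2 * (b + z) ^ 2, ?_⟩).symm
  linear_combination 4 * (A * D - b * (L * z)) * hnorm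

lemma exists_Kmem_eq_mapMatrix {ℓ m : ℕ} (hm : m ≠ 0) (s : ℤ) :
    ∃ R : GL (Fin 2) (ZMod (ℓ ^ (2 * m + 1))), Kmem ℓ m R.val ∧
      R.val = (Int.castRingHom _).mapMatrix !![1, s; (ℓ : ℤ) ^ (2 * m) * s, 1] := by
  set Rm := (Int.castRingHom (ZMod (ℓ ^ (2 * m + 1)))).mapMatrix
    !![1, s; (ℓ : ℤ) ^ (2 * m) * s, 1]
  have hRm : Rm = !![1, (s : ZMod (ℓ ^ (2 * m + 1)));
      (ℓ : ZMod (ℓ ^ (2 * m + 1))) ^ (2 * m) * s, 1] := by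
    ext i j
    fin_cases i <;> fin_cases j <;> simp [Rm]
  have hℓ : IsNilpotent (ℓ : ZMod (ℓ ^ (2 * m + 1))) :=
    ⟨2 * m + 1, by exact_mod_cast ZMod.natCast_self (ℓ ^ (2 * m + 1))⟩
  have hunit : IsUnit Rm := by
    rw [Matrix.isUnit_iff_isUnit_det, hRm, Matrix.det_fin_two_of, mul_one]
    exact IsNilpotent.isUnit_one_sub <| (Commute.all _ _).isNilpotent_mul_left <|
      (Commute.all _ _).isNilpotent_mul_right (hℓ.pow_of_pos (by omega))
  exact ⟨hunit.unit, ⟨1, s, 1, hRm, rfl⟩, rfl⟩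

lemma exists_lucasU_mul_sub_sq_modEq {ℓ : ℕ} (hℓ : ℓ.Prime) (hℓ2 : ℓ ≠ 2) {m j : ℕ}
    (hj0 : 0 < j) (hjm : j < m) {A b z D v : ℤ} (hAD : A - D = ℓ ^ j * v) (hv : ¬ (ℓ : ℤ) ∣ v)
    {M : Matrix (Fin 2) (Fin 2) ℤ} (hM : M = !![A, b; ℓ ^ (2 * m) * z, D])
    (hdet : ¬ (ℓ : ℤ) ∣ M.det) :
    ∃ t : ℤ, ¬ (ℓ : ℤ) ∣ t ∧ (ℓ : ℤ) ∣ lucasU M.trace M.det (2 * ℓ ^ (m - j)) ∧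
      (lucasU M.trace M.det (2 * ℓ ^ (m - j)) * (A - D)) ^ 2 ≡ ℓ ^ (2 * m) * t ^ 2
        [ZMOD ℓ ^ (2 * m + 1)] := by
  have hℓ' : Prime (ℓ : ℤ) := Nat.prime_iff_prime_int.mp hℓ
  have hT : M.trace = A + D := by simp [hM, Matrix.trace_fin_two]
  have hδ : M.det = A * D - b * (ℓ ^ (2 * m) * z) := by rw [hM, Matrix.det_fin_two_of]
  have hA : ¬ (ℓ : ℤ) ∣ A := fun h => hdet <| hδ ▸ dvd_sub (h.mul_right D)
    (((dvd_pow_self _ (by omega)).mul_right z).mul_left b)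
  have h2 : ¬ ℓ ∣ 2 := fun h => hℓ2 ((Nat.prime_dvd_prime_iff_eq hℓ Nat.prime_two).mp h)
  obtain ⟨t, ht, htℓ⟩ :=
    Int.exists_pow_sub_pow_eq_prime_pow_mul hℓ hℓ2 hj0 hAD hv hA h2 (m - j)
  rw [show j + (m - j) = m by omega] at ht
  set K := 2 * ℓ ^ (m - j)
  set u := lucasU M.trace M.det K
  have hu : u * (A - D) ≡ ℓ ^ m * t [ZMOD ℓ ^ (m + 1)] := by
    have hL : (ℓ : ℤ) ^ (m + 1) ∣ M.det - A * D := by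
      rw [hδ, sub_sub_cancel_left, dvd_neg]
      exact ((pow_dvd_pow _ (by omega)).mul_right z).mul_left b
    have hV := lucasU.sub_mul_eq_pow_sub_pow A D K
    rw [← hT] at hV
    refine (Int.modEq_iff_dvd.mpr ?_).symm
    rw [← ht, ← hV, show u * (A - D) - (A - D) * lucasU M.trace (A * D) K =
      (u - lucasU M.trace (A * D) K) * (A - D) by ring]
    exact (hL.trans (lucasU.sub_dvd_sub _ _ _ K)).mul_right _
  refine ⟨t, htℓ, ?_, ?_⟩
  · have h : (ℓ : ℤ) ^ (j + 1) ∣ u * (A - D) :=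
      (hu.of_dvd (pow_dvd_pow _ (by omega))).dvd_iff.mpr ((pow_dvd_pow _ (by omega)).mul_right t)
    rw [hAD, mul_left_comm, pow_succ, mul_dvd_mul_iff_left (pow_ne_zero _ hℓ'.ne_zero)] at h
    exact (hℓ'.dvd_mul.mp h).resolve_right hv
  · have h := Int.sq_modEq_sq_of_dvd_of_modEq (dvd_mul_right _ _) hu
    rwa [mul_pow _ t, ← pow_mul, mul_comm m] at h

lemma exists_forall_not_sq_modEq_discr {ℓ : ℕ} (hℓ : ℓ.Prime) (hℓ2 : ℓ ≠ 2) {m j : ℕ}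
    (hj0 : 0 < j) (hjm : j < m) {A b z D v : ℤ} (hAD : A - D = ℓ ^ j * v) (hv : ¬ (ℓ : ℤ) ∣ v)
    {M : Matrix (Fin 2) (Fin 2) ℤ} (hM : M = !![A, b; ℓ ^ (2 * m) * z, D])
    (hdet : ¬ (ℓ : ℤ) ∣ M.det) :
    ∃ (K : ℕ) (s : ℤ), ∀ σ : ℤ,
      ¬ σ ^ 2 ≡ (M ^ K * !![1, s; ℓ ^ (2 * m) * s, 1]).discr [ZMOD ℓ ^ (2 * m + 1)] := by
  have := Fact.mk hℓ
  obtain ⟨t, ht, hu, hsq⟩ := exists_lucasU_mul_sub_sq_modEq hℓ hℓ2 hj0 hjm hAD hv hM hdet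
  have hℓ0 : ∀ {y : ℤ}, ¬ (ℓ : ℤ) ∣ y → (y : ZMod ℓ) ≠ 0 := fun h => by
    rwa [Ne, ZMod.intCast_zmod_eq_zero_iff_dvd]
  have h2 : (2 : ZMod ℓ) ≠ 0 := Ring.two_ne_zero (by rwa [ZMod.ringChar_zmod_n])
  obtain ⟨s, hs⟩ := ZMod.exists_not_isSquare_sq_add_mul_sq hℓ2 (hℓ0 ht)
    (mul_ne_zero h2 (pow_ne_zero (ℓ ^ (m - j)) (hℓ0 hdet)))
  refine ⟨2 * ℓ ^ (m - j), s.val, fun σ hσ => Int.not_sq_modEq_pow_mul hℓ.ne_zero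
    (N := t ^ 2 + 4 * M.det ^ (2 * ℓ ^ (m - j)) * s.val ^ 2) ?_ m σ ?_⟩
  · convert hs using 2
    push_cast
    rw [ZMod.natCast_zmod_val, mul_comm 2, pow_mul]
    ring
  · have hdisc := (discr_pow_mul_modEq (s := s.val) hM
      (mul_ne_zero two_ne_zero (pow_ne_zero _ hℓ.ne_zero))).of_dvd (mul_dvd_mul_right hu _)
    rw [← pow_succ'] at hdisc
    refine hσ.trans (hdisc.trans ?_)
    convert hsq.add_right (4 * ℓ ^ (2 * m) * M.det ^ (2 * ℓ ^ (m - j)) * s.val ^ 2) using 1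
    ring

theorem stmt_7_general (ℓ m j : ℕ) (hℓ : ℓ.Prime) (hℓodd : ℓ ≠ 2)
    (hj0 : 0 < j) (hjm : j < m)
    (Y : Matrix.GeneralLinearGroup (Fin 2) (ZMod (ℓ ^ (2 * m + 1))))
    (a x b z w : ℤ)
    (hY : Y.val = !![(a : ZMod (ℓ ^ (2 * m + 1))) + (ℓ : ZMod (ℓ ^ (2 * m + 1))) ^ j * (x : ZMod (ℓ ^ (2 * m + 1))),
        (b : ZMod (ℓ ^ (2 * m + 1)));
        (ℓ : ZMod (ℓ ^ (2 * m + 1))) ^ (2 * m) * (z : ZMod (ℓ ^ (2 * m + 1))),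
        (a : ZMod (ℓ ^ (2 * m + 1))) + (ℓ : ZMod (ℓ ^ (2 * m + 1))) ^ j * (w : ZMod (ℓ ^ (2 * m + 1)))])
    (hsq : ∀ (k : ℕ) (R : Matrix.GeneralLinearGroup (Fin 2) (ZMod (ℓ ^ (2 * m + 1)))),
      Kmem ℓ m R.val → ∃ s : ZMod (ℓ ^ (2 * m + 1)),
        (Matrix.trace (Y.val ^ k * R.val)) ^ 2 - 4 * (Y.val ^ k * R.val).det = s ^ 2) :
    x ≡ w [ZMOD (ℓ : ℤ)] := by
  by_contra hxw
  set M : Matrix (Fin 2) (Fin 2) ℤ :=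
    !![a + ℓ ^ j * x, b; ℓ ^ (2 * m) * z, a + ℓ ^ j * w] with hM
  have hYM : Y.val = (Int.castRingHom _).mapMatrix M := by
    rw [hY]
    ext i j
    fin_cases i <;> fin_cases j <;> simp [M]
  have hdet : ¬ (ℓ : ℤ) ∣ M.det := by
    refine Int.not_dvd_of_isUnit_intCast (k := 2 * m + 1) hℓ.one_lt (by omega) ?_
    rw [← eq_intCast (Int.castRingHom _), RingHom.map_det, ← hYM]
    exact (Matrix.isUnit_iff_isUnit_det _).mp Y.isUnit
  obtain ⟨K, s, hK⟩ := exists_forall_not_sq_modEq_discr hℓ hℓodd hj0 hjm (v := x - w) (by ring)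
    (fun h => hxw (Int.modEq_iff_dvd.mpr h).symm) hM hdet
  obtain ⟨R, hRK, hR⟩ := exists_Kmem_eq_mapMatrix (ℓ := ℓ) (m := m) (by omega) s
  obtain ⟨σ, hσ⟩ := hsq K R hRK
  obtain ⟨σ, rfl⟩ := ZMod.intCast_surjective σ
  have hΔ : ((σ ^ 2 : ℤ) : ZMod (ℓ ^ (2 * m + 1))) =
      ((M ^ K * !![1, s; ℓ ^ (2 * m) * s, 1]).discr : ℤ) := by
    rw [Int.cast_pow, ← hσ, ← Matrix.discr_fin_two, hYM, hR, ← map_pow, ← map_mul,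
      ← RingHom.map_discr_fin_two, eq_intCast]
  exact hK σ (by exact_mod_cast (ZMod.intCast_eq_intCast_iff _ _ _).mp hΔ)

/-- Let `Y ∈ GL₂(ℤ/ℓ^(2m+1)ℤ)` be `[[a + ℓʲx, b],[ℓ^(2m)z, a + ℓʲw]]`
with `0 < j < m`.  If `Δ(Yᵏ·R)` is a square for every `k` and every `R ∈ 𝕂(ℓ^(2m+1))`,
then `x ≡ w (mod ℓ)`. -/
theorem stmt_7 (ℓ m j : ℕ) (hℓ : ℓ.Prime) (hℓodd : ℓ ≠ 2) (hm : 2 ≤ m)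
    (hj0 : 0 < j) (hjm : j < m)
    (Y : Matrix.GeneralLinearGroup (Fin 2) (ZMod (ℓ ^ (2 * m + 1))))
    (a x b z w : ℤ)
    (hY : Y.val = !![(a : ZMod (ℓ ^ (2 * m + 1))) + (ℓ : ZMod (ℓ ^ (2 * m + 1))) ^ j * (x : ZMod (ℓ ^ (2 * m + 1))),
        (b : ZMod (ℓ ^ (2 * m + 1)));
        (ℓ : ZMod (ℓ ^ (2 * m + 1))) ^ (2 * m) * (z : ZMod (ℓ ^ (2 * m + 1))),
        (a : ZMod (ℓ ^ (2 * m + 1))) + (ℓ : ZMod (ℓ ^ (2 * m + 1))) ^ j * (w : ZMod (ℓ ^ (2 * m + 1)))])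
    (hsq : ∀ (k : ℕ) (R : Matrix.GeneralLinearGroup (Fin 2) (ZMod (ℓ ^ (2 * m + 1)))),
      Kmem ℓ m R.val → ∃ s : ZMod (ℓ ^ (2 * m + 1)),
        (Matrix.trace (Y.val ^ k * R.val)) ^ 2 - 4 * (Y.val ^ k * R.val).det = s ^ 2) :
    x ≡ w [ZMOD (ℓ : ℤ)] :=
  stmt_7_general ℓ m j hℓ hℓodd hj0 hjm Y a x b z w hY hsq
end

section
/- Let ℓ be an odd prime, m ≥ 1, and Y ∈ GL₂(Z/ℓ^{2m+1}Z) of the form Y = [[a + ℓ^m·x, b],[ℓ^{2m}·z, a + ℓ^m·w]] for integers a, x, b, z, w. If for every R ∈ 𝕂(ℓ^{2m+1}) the discriminant Δ(Y·R) is a square in Z/ℓ^{2m+1}Z, then (x − w) ≡ (z − b) (mod ℓ) or (x − w) ≡ −(z − b) (mod ℓ). -/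
/-!
Multiplying `Y` by the shear `Rₛ = [[1, s], [ℓ^(2m)s, 1]] ∈ 𝕂` gives
`Δ(Y Rₛ) = ℓ^(2m) ((2as + b + z)² + e)` with `e = (x - w)² - (z - b)²`, and `ℓ^(2m) d` can only be
a square mod `ℓ^(2m+1)` if `d` is a square mod `ℓ`. As `a` is a unit mod `ℓ`, `2as + b + z` runs
through all of `𝔽_ℓ`, so `c² + e` is a square for every `c`. If `e ≠ 0`, adding `e` repeatedly to
squares makes every `n • e`, hence every element of `𝔽_ℓ`, a square, which is false for odd `ℓ`.
So `e = (x - w - (z - b)) (x - w + (z - b)) ≡ 0 (mod ℓ)`.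
-/

open Matrix

section Discriminant

variable {R : Type*} [CommRing R]

theorem discr_mul_shear {L : R} {m : ℕ} (hm : 1 ≤ m) (hL : L ^ (2 * m + 1) = 0)
    (a x b z w s : R) :
    discr (!![a + L ^ m * x, b; L ^ (2 * m) * z, a + L ^ m * w] * !![1, s; L ^ (2 * m) * s, 1]) =
      L ^ (2 * m) * ((2 * a * s + b + z) ^ 2 + ((x - w) ^ 2 - (z - b) ^ 2)) := by
  have hL3 : L ^ (3 * m) = 0 := pow_eq_zero_of_le (by omega) hL
  have hL4 : L ^ (4 * m) = 0 := pow_eq_zero_of_le (by omega) hL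
  rw [discr_fin_two, mul_fin_two, trace_fin_two_of, det_fin_two_of]
  linear_combination (2 * (x + w) * s * (b + z) + 4 * s ^ 2 * a * (x + w)) * hL3
    + (s ^ 2 * (b + z) ^ 2 + 4 * s ^ 2 * (x * w - b * z)) * hL4

theorem isUnit_shear {c : R} (hc : IsNilpotent c) (s : R) : IsUnit !![1, s; c * s, 1] := by
  rw [isUnit_iff_isUnit_det, det_fin_two_of, one_mul, mul_left_comm]
  exact ((Commute.all _ _).isNilpotent_mul_right hc).isUnit_one_sub

theorem map_det_eq_sq_of_map_eq_zero {S : Type*} [CommRing S] (f : R →+* S) {L : R} (hL : f L = 0) {m : ℕ}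
    (hm : m ≠ 0) (a x b z w : R) :
    f !![a + L ^ m * x, b; L ^ (2 * m) * z, a + L ^ m * w].det = f a ^ 2 := by
  simp [det_fin_two_of, hL, hm, sq]

end Discriminant

theorem Kmem_shear (ℓ m : ℕ) (s : ZMod (ℓ ^ (2 * m + 1))) :
    Kmem ℓ m !![1, s; (ℓ : ZMod (ℓ ^ (2 * m + 1))) ^ (2 * m) * s, 1] :=
  ⟨1, s, 1, rfl, rfl⟩

theorem Int.exists_dvd_sq_sub_of_pow_dvd {p : ℤ} (hp : p ≠ 0) (k : ℕ) {S d : ℤ}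
    (h : p ^ (2 * k + 1) ∣ S ^ 2 - p ^ (2 * k) * d) : ∃ T : ℤ, p ∣ T ^ 2 - d := by
  have hS2 : p ^ (2 * k) ∣ S ^ 2 := by
    simpa using dvd_add ((pow_dvd_pow p (Nat.le_succ _)).trans h) (Dvd.intro d rfl)
  obtain ⟨T, rfl⟩ : p ^ k ∣ S := by
    rw [mul_comm, pow_mul] at hS2
    exact (Int.pow_dvd_pow_iff two_ne_zero).mp hS2
  refine ⟨T, (mul_dvd_mul_iff_left (pow_ne_zero (2 * k) hp)).mp ?_⟩
  rw [← pow_succ, show p ^ (2 * k) * (T ^ 2 - d) = (p ^ k * T) ^ 2 - p ^ (2 * k) * d by ring]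
  exact h

theorem ZMod.isSquare_cast_of_isSquare_pow_mul {p : ℕ} (hp : p ≠ 0) (k : ℕ)
    (d : ZMod (p ^ (2 * k + 1)))
    (h : IsSquare ((p : ZMod (p ^ (2 * k + 1))) ^ (2 * k) * d)) :
    IsSquare (ZMod.castHom (dvd_pow_self p (Nat.succ_ne_zero (2 * k))) (ZMod p) d) := by
  obtain ⟨s, hs⟩ := h
  obtain ⟨D, rfl⟩ := ZMod.intCast_surjective d
  obtain ⟨S, rfl⟩ := ZMod.intCast_surjective s
  have hdvd : (p : ℤ) ^ (2 * k + 1) ∣ S ^ 2 - p ^ (2 * k) * D := by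
    exact_mod_cast (ZMod.intCast_zmod_eq_zero_iff_dvd _ _).mp (by push_cast; rw [hs]; ring)
  obtain ⟨T, hT⟩ := Int.exists_dvd_sq_sub_of_pow_dvd (by exact_mod_cast hp) k hdvd
  refine ⟨T, ?_⟩
  have hT' := (ZMod.intCast_zmod_eq_zero_iff_dvd _ p).mpr hT
  push_cast at hT'
  rw [map_intCast]
  linear_combination -hT'

theorem ZMod.eq_zero_of_forall_isSquare_sq_add {p : ℕ} [Fact p.Prime] (hp : p ≠ 2) {e : ZMod p}
    (h : ∀ c : ZMod p, IsSquare (c ^ 2 + e)) : e = 0 := by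
  by_contra he
  have hmul : ∀ n : ℕ, IsSquare ((n : ZMod p) * e) := by
    intro n
    induction n with
    | zero => simp
    | succ n ih =>
      obtain ⟨c, hc⟩ := ih
      simpa [add_mul, hc, sq] using h c
  obtain ⟨v, hv⟩ := FiniteField.exists_nonsquare (F := ZMod p) (by rwa [ZMod.ringChar_zmod_n])
  apply hv
  simpa [he] using hmul (v * e⁻¹).val

/-- Let `Y ∈ GL₂(ℤ/ℓ^(2m+1)ℤ)` be `[[a + ℓᵐx, b],[ℓ^(2m)z, a + ℓᵐw]]`.
If `Δ(Y·R)` is a square for every `R ∈ 𝕂(ℓ^(2m+1))`, then `x - w ≡ ±(z - b) (mod ℓ)`. -/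
theorem stmt_8 (ℓ m : ℕ) (hℓ : ℓ.Prime) (hℓodd : ℓ ≠ 2) (hm : 1 ≤ m)
    (Y : Matrix.GeneralLinearGroup (Fin 2) (ZMod (ℓ ^ (2 * m + 1))))
    (a x b z w : ℤ)
    (hY : Y.val = !![(a : ZMod (ℓ ^ (2 * m + 1))) + (ℓ : ZMod (ℓ ^ (2 * m + 1))) ^ m * (x : ZMod (ℓ ^ (2 * m + 1))),
        (b : ZMod (ℓ ^ (2 * m + 1)));
        (ℓ : ZMod (ℓ ^ (2 * m + 1))) ^ (2 * m) * (z : ZMod (ℓ ^ (2 * m + 1))),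
        (a : ZMod (ℓ ^ (2 * m + 1))) + (ℓ : ZMod (ℓ ^ (2 * m + 1))) ^ m * (w : ZMod (ℓ ^ (2 * m + 1)))])
    (hsq : ∀ R : Matrix.GeneralLinearGroup (Fin 2) (ZMod (ℓ ^ (2 * m + 1))),
      Kmem ℓ m R.val → ∃ s : ZMod (ℓ ^ (2 * m + 1)),
        (Matrix.trace (Y.val * R.val)) ^ 2 - 4 * (Y.val * R.val).det = s ^ 2) :
    x - w ≡ z - b [ZMOD (ℓ : ℤ)] ∨ x - w ≡ -(z - b) [ZMOD (ℓ : ℤ)] := by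
  have : Fact ℓ.Prime := ⟨hℓ⟩
  set L : ZMod (ℓ ^ (2 * m + 1)) := (ℓ : ZMod (ℓ ^ (2 * m + 1))) with hLdef
  set φ := ZMod.castHom (dvd_pow_self ℓ (Nat.succ_ne_zero (2 * m))) (ZMod ℓ)
  have hL : L ^ (2 * m + 1) = 0 := by
    rw [hLdef, ← Nat.cast_pow, ZMod.natCast_self]
  have h2a : (2 * a : ZMod ℓ) ≠ 0 := by
    have hdet := (Matrix.isUnit_iff_isUnit_det _).mp Y.isUnit |>.map φ
    rw [hY, map_det_eq_sq_of_map_eq_zero φ (by simp [L, φ]) (by omega), map_intCast] at hdet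
    exact mul_ne_zero (Ring.two_ne_zero (by rwa [ZMod.ringChar_zmod_n]))
      (isUnit_pow_iff two_ne_zero |>.mp hdet).ne_zero
  have hsq_add : ∀ c : ZMod ℓ, IsSquare (c ^ 2 + ((x - w) ^ 2 - (z - b) ^ 2 : ZMod ℓ)) := by
    intro c
    obtain ⟨s, hs⟩ := ZMod.intCast_surjective ((c - b - z) / (2 * a) : ZMod ℓ)
    have hc : 2 * (a : ZMod ℓ) * s + b + z = c := by rw [hs, mul_div_cancel₀ _ h2a]; ring
    have hLnil : IsNilpotent (L ^ (2 * m)) :=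
      ⟨2, by rw [← pow_mul]; exact pow_eq_zero_of_le (by omega) hL⟩
    have hR := isUnit_shear hLnil (s : ZMod (ℓ ^ (2 * m + 1)))
    obtain ⟨t, ht⟩ := hsq hR.unit (Kmem_shear ℓ m _)
    rw [← Matrix.discr_fin_two, IsUnit.unit_spec, hY, discr_mul_shear hm hL] at ht
    have hsqℓ := ZMod.isSquare_cast_of_isSquare_pow_mul hℓ.ne_zero m _ ⟨t, ht.trans (sq t)⟩
    simpa only [map_add, map_sub, map_mul, map_pow, map_intCast, map_ofNat, hc] using hsqℓ
  have he := ZMod.eq_zero_of_forall_isSquare_sq_add hℓodd hsq_add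
  rw [sub_eq_zero, sq_eq_sq_iff_eq_or_eq_neg] at he
  simpa only [← ZMod.intCast_eq_intCast_iff, Int.cast_sub, Int.cast_neg] using he
end

section
/- Let ℓ be an odd prime, m ≥ 1, and X ∈ GL₂(Z/ℓ^{2m+1}Z) of the form X = [[a + ℓ^{m+1}·x, b],[ℓ^{2m}·z, −a + ℓ^{m+1}·w]] for integers a, x, b, z, w with ℓ ∤ a. Then there exists M ∈ GL₂(Z/ℓ^{2m+1}Z) such that the conjugate M⁻¹·H·M of the subgroup H generated by X and 𝕂(ℓ^{2m+1}) is contained in R(ℓ^{2m+1}). -/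
/-- `𝕂(ℓ^(2m+1))` as a set of elements of `GL₂(ℤ/ℓ^(2m+1)ℤ)`. -/
def KsetGL (ℓ m : ℕ) : Set (Matrix.GeneralLinearGroup (Fin 2) (ZMod (ℓ ^ (2 * m + 1)))) :=
  {g | Kmem ℓ m g.val}

/-- Membership in the group `R(ℓ^(2m+1))`: matrices `[[r, s],[ε·ℓ^(2m)·s, ε·t]]` with
`ε = ±1` and `r ≡ t (mod ℓ^(m+1))`. -/
def Rmem (ℓ m : ℕ) (g : Matrix (Fin 2) (Fin 2) (ZMod (ℓ ^ (2 * m + 1)))) : Prop :=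
  ∃ (r s t ε : ZMod (ℓ ^ (2 * m + 1))), (ε = 1 ∨ ε = -1) ∧
    g = !![r, s; ε * (ℓ : ZMod (ℓ ^ (2 * m + 1))) ^ (2 * m) * s, ε * t] ∧
    ZMod.castHom (pow_dvd_pow ℓ (by omega : m + 1 ≤ 2 * m + 1)) (ZMod (ℓ ^ (m + 1))) r =
      ZMod.castHom (pow_dvd_pow ℓ (by omega : m + 1 ≤ 2 * m + 1)) (ZMod (ℓ ^ (m + 1))) t

lemma mat2_ext {α : Type*} (a b c d a' b' c' d' : α) (h1 : a = a') (h2 : b = b')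
    (h3 : c = c') (h4 : d = d') : !![a,b;c,d] = !![a',b';c',d'] := by
  subst h1 h2 h3 h4; rfl

lemma powZero (ℓ N k : ℕ) (hk : N ≤ k) : ((ℓ : ZMod (ℓ ^ N)))^k = 0 := by
  have : ((ℓ^k : ℕ) : ZMod (ℓ^N)) = 0 := by
    rw [ZMod.natCast_eq_zero_iff]; exact pow_dvd_pow ℓ hk
  simpa using this

lemma diff_fac (ℓ : ℕ) (hℓ : 2 ≤ ℓ) (N j : ℕ) (hj : j ≤ N) (r t : ZMod (ℓ^N))
    (h : ZMod.castHom (pow_dvd_pow ℓ hj) (ZMod (ℓ^j)) r =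
         ZMod.castHom (pow_dvd_pow ℓ hj) (ZMod (ℓ^j)) t) :
    ∃ k : ZMod (ℓ^N), r - t = (ℓ : ZMod (ℓ^N))^j * k := by
  haveI : NeZero (ℓ^N) := ⟨pow_ne_zero _ (by omega)⟩
  haveI : NeZero (ℓ^j) := ⟨pow_ne_zero _ (by omega)⟩
  set u := r - t with hu
  have h0 : ZMod.castHom (pow_dvd_pow ℓ hj) (ZMod (ℓ^j)) u = 0 := by
    rw [hu, map_sub, h, sub_self]
  have h1 : ((u.val : ℕ) : ZMod (ℓ^j)) = 0 := by
    rwa [ZMod.natCast_val, ← ZMod.castHom_apply (h := pow_dvd_pow ℓ hj)]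
  rw [ZMod.natCast_eq_zero_iff] at h1
  obtain ⟨c, hc⟩ := h1
  refine ⟨(c : ℕ), ?_⟩
  have : u = ((u.val : ℕ) : ZMod (ℓ^N)) := (ZMod.natCast_zmod_val u).symm
  rw [this, hc]
  push_cast
  ring

lemma Rmem_one (ℓ m : ℕ) : Rmem ℓ m (1 : Matrix (Fin 2) (Fin 2) (ZMod (ℓ ^ (2*m+1)))) := by
  refine ⟨1, 0, 1, 1, Or.inl rfl, ?_, rfl⟩
  rw [Matrix.one_fin_two]
  exact mat2_ext _ _ _ _ _ _ _ _ rfl rfl (by ring) (by ring)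

lemma Rmem_mul (ℓ m : ℕ) (hℓ : 2 ≤ ℓ) (hm : 1 ≤ m)
    (A B : Matrix (Fin 2) (Fin 2) (ZMod (ℓ ^ (2*m+1))))
    (hA : Rmem ℓ m A) (hB : Rmem ℓ m B) : Rmem ℓ m (A * B) := by
  obtain ⟨r, s, t, ε, hε, rfl, hrt⟩ := hA
  obtain ⟨r', s', t', ε', hε', rfl, hrt'⟩ := hB
  set q : ZMod (ℓ ^ (2*m+1)) := (ℓ : ZMod (ℓ ^ (2*m+1)))^(2*m) with hq
  have hε2 : ε * ε = 1 := by rcases hε with h | h <;> rw [h] <;> ring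
  have hε2' : ε' * ε' = 1 := by rcases hε' with h | h <;> rw [h] <;> ring
  have hqp : q * (ℓ : ZMod (ℓ ^ (2*m+1)))^(m+1) = 0 := by
    rw [hq, ← pow_add]; exact powZero ℓ _ _ (by omega)
  obtain ⟨k, hk⟩ := diff_fac ℓ hℓ (2*m+1) (m+1) (by omega) r t hrt
  obtain ⟨k', hk'⟩ := diff_fac ℓ hℓ (2*m+1) (m+1) (by omega) r' t' hrt'
  refine ⟨r*r' + ε'*q*s*s', r*s' + ε'*s*t', ε'*q*s*s' + t*t', ε*ε', ?_, ?_, ?_⟩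
  · rcases hε with h | h <;> rcases hε' with h' | h' <;> rw [h, h'] <;> [left; right; right; left] <;> ring
  · rw [Matrix.mul_fin_two]
    refine mat2_ext _ _ _ _ _ _ _ _ (by ring) (by ring) ?_ (by linear_combination (-(ε*q*s*s')) * hε2')
    linear_combination (ε*q*s) * hk' + (-(ε*ε'*q*s')) * hk + (ε*s*k' - ε*ε'*s'*k) * hqp + (-(ε*q*s*t')) * hε2'
  · have e1 : ZMod.castHom (pow_dvd_pow ℓ (by omega : m + 1 ≤ 2 * m + 1)) (ZMod (ℓ ^ (m + 1))) r =
        ZMod.castHom (pow_dvd_pow ℓ (by omega : m + 1 ≤ 2 * m + 1)) (ZMod (ℓ ^ (m + 1))) t := hrt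
    have e2 : ZMod.castHom (pow_dvd_pow ℓ (by omega : m + 1 ≤ 2 * m + 1)) (ZMod (ℓ ^ (m + 1))) r' =
        ZMod.castHom (pow_dvd_pow ℓ (by omega : m + 1 ≤ 2 * m + 1)) (ZMod (ℓ ^ (m + 1))) t' := hrt'
    simp only [map_add, map_mul]
    linear_combination (ZMod.castHom (pow_dvd_pow ℓ (by omega : m + 1 ≤ 2 * m + 1)) (ZMod (ℓ ^ (m + 1))) r') * e1 +
      (ZMod.castHom (pow_dvd_pow ℓ (by omega : m + 1 ≤ 2 * m + 1)) (ZMod (ℓ ^ (m + 1))) t) * e2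

lemma Rmem_inv (ℓ m : ℕ)
    (g : Matrix.GeneralLinearGroup (Fin 2) (ZMod (ℓ ^ (2*m+1))))
    (hg : Rmem ℓ m g.val) : Rmem ℓ m ((g⁻¹ : _).val) := by
  obtain ⟨r, s, t, ε, hε, hval, hrt⟩ := hg
  have hu : IsUnit g.val.det := (Matrix.isUnit_iff_isUnit_det g.val).mp g.isUnit
  obtain ⟨d, hd⟩ := hu
  set e : ZMod (ℓ ^ (2*m+1)) := ((d⁻¹ : (ZMod (ℓ ^ (2*m+1)))ˣ) : ZMod (ℓ ^ (2*m+1))) with he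
  have hed : e * g.val.det = 1 := by rw [he, ← hd]; exact d.inv_mul
  have hdet : g.val.det = ε * (r * t - (ℓ : ZMod (ℓ ^ (2*m+1)))^(2*m) * s * s) := by
    rw [hval, Matrix.det_fin_two_of]; ring
  have hed' : e * (ε * (r * t - (ℓ : ZMod (ℓ ^ (2*m+1)))^(2*m) * s * s)) = 1 := by
    rw [← hdet]; exact hed
  set A : Matrix (Fin 2) (Fin 2) (ZMod (ℓ ^ (2*m+1))) :=
    !![ε*t*e, -(s*e); -(ε*(ℓ : ZMod (ℓ ^ (2*m+1)))^(2*m)*s*e), r*e] with hA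
  have h1 : g.val * A = 1 := by
    rw [hval, hA, Matrix.mul_fin_two, Matrix.one_fin_two]
    rcases hε with hE | hE <;> subst hE <;>
      refine mat2_ext _ _ _ _ _ _ _ _ ?_ ?_ ?_ ?_ <;>
      first
        | ring1
        | linear_combination hed'
  have h2 : A * g.val = 1 := by
    rw [hval, hA, Matrix.mul_fin_two, Matrix.one_fin_two]
    rcases hε with hE | hE <;> subst hE <;>
      refine mat2_ext _ _ _ _ _ _ _ _ ?_ ?_ ?_ ?_ <;>
      first
        | ring1
        | linear_combination hed'
  have hginv : (g⁻¹ : _).val = A := by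
    have hB : g * (⟨A, g.val, h2, h1⟩ : Matrix.GeneralLinearGroup (Fin 2) (ZMod (ℓ ^ (2*m+1)))) = 1 :=
      Units.ext h1
    have := (eq_inv_of_mul_eq_one_right hB).symm
    rw [this]
  refine ⟨ε*t*e, -(s*e), ε*r*e, ε, hε, ?_, ?_⟩
  · rw [hginv, hA]
    refine mat2_ext _ _ _ _ _ _ _ _ rfl rfl (by ring) ?_
    rcases hε with hE | hE <;> subst hE <;> ring
  · simp only [map_mul, map_neg]
    rw [hrt]

/-- For `X = [[a + ℓ^(m+1)x, b],[ℓ^(2m)z, -a + ℓ^(m+1)w]]` in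
`GL₂(ℤ/ℓ^(2m+1)ℤ)` with `ℓ ∤ a`, the subgroup generated by `X` and `𝕂(ℓ^(2m+1))` is,
after conjugation by a suitable `M`, contained in `R(ℓ^(2m+1))`. -/
theorem stmt_10 (ℓ m : ℕ) (hℓ : ℓ.Prime) (hℓodd : ℓ ≠ 2) (hm : 1 ≤ m)
    (X : Matrix.GeneralLinearGroup (Fin 2) (ZMod (ℓ ^ (2 * m + 1))))
    (a x b z w : ℤ) (ha : ¬ (ℓ : ℤ) ∣ a)
    (hX : X.val = !![(a : ZMod (ℓ ^ (2 * m + 1))) + (ℓ : ZMod (ℓ ^ (2 * m + 1))) ^ (m + 1) * (x : ZMod (ℓ ^ (2 * m + 1))),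
        (b : ZMod (ℓ ^ (2 * m + 1)));
        (ℓ : ZMod (ℓ ^ (2 * m + 1))) ^ (2 * m) * (z : ZMod (ℓ ^ (2 * m + 1))),
        -(a : ZMod (ℓ ^ (2 * m + 1))) + (ℓ : ZMod (ℓ ^ (2 * m + 1))) ^ (m + 1) * (w : ZMod (ℓ ^ (2 * m + 1)))]) :
    ∃ M : Matrix.GeneralLinearGroup (Fin 2) (ZMod (ℓ ^ (2 * m + 1))),
      ∀ h ∈ Subgroup.closure (insert X (KsetGL ℓ m)),
        Rmem ℓ m ((M⁻¹ * h * M).val) := by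
  have hℓ2 : 2 ≤ ℓ := hℓ.two_le
  -- choose the conjugating parameter c
  have hℓZ : Prime (ℓ : ℤ) := Nat.prime_iff_prime_int.mp hℓ
  have hcop : IsCoprime (ℓ : ℤ) (2*a) := by
    rw [hℓZ.coprime_iff_not_dvd]
    intro hdvd
    rcases hℓZ.dvd_mul.mp hdvd with h2 | h2
    · have h2n : ℓ ∣ 2 := by exact_mod_cast h2
      have := Nat.le_of_dvd (by norm_num) h2n
      exact hℓodd (by omega)
    · exact ha h2
  obtain ⟨u, v, huv⟩ := hcop
  set c : ℤ := -v*(z+b) with hc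
  have hdiv : z + b + 2*a*c = ℓ * (u*(z+b)) := by
    rw [hc]; linear_combination (-(z+b))*huv
  set C : ZMod (ℓ ^ (2*m+1)) := ((c : ℤ) : ZMod (ℓ ^ (2*m+1))) with hC
  set q : ZMod (ℓ ^ (2*m+1)) := (ℓ : ZMod (ℓ ^ (2*m+1)))^(2*m) with hq
  set p : ZMod (ℓ ^ (2*m+1)) := (ℓ : ZMod (ℓ ^ (2*m+1)))^(m+1) with hp
  have hql : q * (ℓ : ZMod (ℓ ^ (2*m+1))) = 0 := by
    rw [hq, ← pow_succ]; exact powZero ℓ _ _ le_rfl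
  have hqq : q * q = 0 := by
    rw [hq, ← pow_add]; exact powZero ℓ _ _ (by omega)
  have hqp : q * p = 0 := by
    rw [hq, hp, ← pow_add]; exact powZero ℓ _ _ (by omega)
  have hqc : q * ((z : ZMod (ℓ ^ (2*m+1))) + (b : ZMod (ℓ ^ (2*m+1))) + 2*(a : ZMod (ℓ ^ (2*m+1)))*C) = 0 := by
    have h1 : ((z + b + 2*a*c : ℤ) : ZMod (ℓ ^ (2*m+1))) =
        (ℓ : ZMod (ℓ ^ (2*m+1))) * ((u*(z+b) : ℤ) : ZMod (ℓ ^ (2*m+1))) := by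
      rw [hdiv]; push_cast; ring
    have h2 : (z : ZMod (ℓ ^ (2*m+1))) + (b : ZMod (ℓ ^ (2*m+1))) + 2*(a : ZMod (ℓ ^ (2*m+1)))*C =
        ((z + b + 2*a*c : ℤ) : ZMod (ℓ ^ (2*m+1))) := by
      rw [hC]; push_cast; ring
    rw [h2, h1, ← mul_assoc, hql, zero_mul]
  -- the conjugating matrix
  have hMu : (!![1, C; 0, 1] : Matrix (Fin 2) (Fin 2) (ZMod (ℓ ^ (2*m+1)))) * !![1, -C; 0, 1] = 1 := by
    rw [Matrix.mul_fin_two, Matrix.one_fin_two]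
    exact mat2_ext _ _ _ _ _ _ _ _ (by ring) (by ring) (by ring) (by ring)
  have hMu' : (!![1, -C; 0, 1] : Matrix (Fin 2) (Fin 2) (ZMod (ℓ ^ (2*m+1)))) * !![1, C; 0, 1] = 1 := by
    rw [Matrix.mul_fin_two, Matrix.one_fin_two]
    exact mat2_ext _ _ _ _ _ _ _ _ (by ring) (by ring) (by ring) (by ring)
  set M : Matrix.GeneralLinearGroup (Fin 2) (ZMod (ℓ ^ (2 * m + 1))) :=
    ⟨!![1, C; 0, 1], !![1, -C; 0, 1], hMu, hMu'⟩ with hM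
  have hMval : (M : Matrix (Fin 2) (Fin 2) (ZMod (ℓ ^ (2*m+1)))) = !![1, C; 0, 1] := rfl
  have hMinv : ((M⁻¹ : _) : Matrix (Fin 2) (Fin 2) (ZMod (ℓ ^ (2*m+1)))) = !![1, -C; 0, 1] := rfl
  refine ⟨M, ?_⟩
  -- the pullback of R under conjugation is a subgroup
  set S : Subgroup (Matrix.GeneralLinearGroup (Fin 2) (ZMod (ℓ ^ (2 * m + 1)))) :=
    { carrier := {h | Rmem ℓ m ((M⁻¹ * h * M).val)}
      one_mem' := by
        have : M⁻¹ * 1 * M = 1 := by group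
        show Rmem ℓ m ((M⁻¹ * 1 * M).val)
        rw [this, Units.val_one]
        exact Rmem_one ℓ m
      mul_mem' := by
        intro g₁ g₂ hg₁ hg₂
        show Rmem ℓ m ((M⁻¹ * (g₁ * g₂) * M).val)
        have : M⁻¹ * (g₁ * g₂) * M = (M⁻¹ * g₁ * M) * (M⁻¹ * g₂ * M) := by group
        rw [this, Units.val_mul]
        exact Rmem_mul ℓ m hℓ2 hm _ _ hg₁ hg₂
      inv_mem' := by
        intro g hg
        show Rmem ℓ m ((M⁻¹ * g⁻¹ * M).val)
        have : M⁻¹ * g⁻¹ * M = (M⁻¹ * g * M)⁻¹ := by group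
        rw [this]
        exact Rmem_inv ℓ m _ hg } with hS
  intro h hh
  refine (Subgroup.closure_le S).mpr ?_ hh
  intro g hg
  rcases hg with rfl | hgK
  · -- the generator X
    show Rmem ℓ m ((M⁻¹ * g * M).val)
    rw [Units.val_mul, Units.val_mul, hMinv, hMval, hX, Matrix.mul_fin_two, Matrix.mul_fin_two]
    refine ⟨(a : ZMod (ℓ ^ (2*m+1))) + p * x - C * (q * z),
      ((a : ZMod (ℓ ^ (2*m+1))) + p * x - C * (q * z)) * C + ((b : ZMod (ℓ ^ (2*m+1))) - C * (-(a:ZMod (ℓ ^ (2*m+1))) + p * w)),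
      -((q * z) * C + (-(a:ZMod (ℓ ^ (2*m+1))) + p * w)), -1, Or.inr rfl, ?_, ?_⟩
    · refine mat2_ext _ _ _ _ _ _ _ _ (by ring) (by ring) ?_ (by ring)
      linear_combination hqc + (-(C*C*(z:ZMod (ℓ ^ (2*m+1))))) * hqq + (C*((x:ZMod (ℓ ^ (2*m+1))) - (w:ZMod (ℓ ^ (2*m+1))))) * hqp
    · rw [← sub_eq_zero, ← map_sub]
      have hRT : ((a : ZMod (ℓ ^ (2*m+1))) + p * x - C * (q * z)) -
          (-((q * z) * C + (-(a:ZMod (ℓ ^ (2*m+1))) + p * w))) = p * ((x:ZMod (ℓ ^ (2*m+1))) + w) := by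
        ring
      rw [hRT, hp, map_mul, map_pow, map_natCast, powZero ℓ (m+1) (m+1) le_rfl, zero_mul]
  · -- generators from K
    obtain ⟨r, s, t, hval, hrt⟩ := hgK
    show Rmem ℓ m ((M⁻¹ * g * M).val)
    obtain ⟨k, hk⟩ := diff_fac ℓ hℓ2 (2*m+1) (2*m) (by omega) r t hrt
    have hrt' : ZMod.castHom (pow_dvd_pow ℓ (by omega : m + 1 ≤ 2 * m + 1)) (ZMod (ℓ ^ (m + 1))) r =
        ZMod.castHom (pow_dvd_pow ℓ (by omega : m + 1 ≤ 2 * m + 1)) (ZMod (ℓ ^ (m + 1))) t := by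
      have h2 := congrArg (ZMod.castHom (pow_dvd_pow ℓ (by omega : m+1 ≤ 2*m)) (ZMod (ℓ^(m+1)))) hrt
      rw [← RingHom.comp_apply, ← RingHom.comp_apply, ZMod.castHom_comp] at h2
      exact h2
    have hqq' : (ℓ : ZMod (ℓ ^ (2*m+1)))^(2*m) * (ℓ : ZMod (ℓ ^ (2*m+1)))^(2*m) = 0 := by
      rw [← pow_add]; exact powZero ℓ _ _ (by omega)
    rw [Units.val_mul, Units.val_mul, hMinv, hMval, hval, Matrix.mul_fin_two, Matrix.mul_fin_two]
    refine ⟨r - C * ((ℓ : ZMod (ℓ ^ (2*m+1)))^(2*m) * s),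
      (r - C * ((ℓ : ZMod (ℓ ^ (2*m+1)))^(2*m) * s)) * C + (s - C * t),
      ((ℓ : ZMod (ℓ ^ (2*m+1)))^(2*m) * s) * C + t, 1, Or.inl rfl, ?_, ?_⟩
    · refine mat2_ext _ _ _ _ _ _ _ _ (by ring) (by ring) ?_ (by ring)
      linear_combination (-((ℓ : ZMod (ℓ ^ (2*m+1)))^(2*m)*C)) * hk +
        (C*C*s - C*k) * hqq'
    · rw [← sub_eq_zero, ← map_sub]
      have hRT : (r - C * ((ℓ : ZMod (ℓ ^ (2*m+1)))^(2*m) * s)) - (((ℓ : ZMod (ℓ ^ (2*m+1)))^(2*m) * s) * C + t) =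
          (r - t) + (ℓ : ZMod (ℓ ^ (2*m+1)))^(2*m) * (-(2*C*s)) := by ring
      rw [hRT, map_add, map_sub, hrt', sub_self, zero_add, map_mul, map_pow, map_natCast,
        powZero ℓ (m+1) (2*m) (by omega), zero_mul]
end

section
/- Let ℓ be an odd prime and m ≥ 1. Every matrix g ∈ GL₂(Z/ℓ^{2m+1}Z) of the form g = [[r, s],[ℓ^{2m}·s, t]] with r ≡ t (mod ℓ^{m+1}) has the vector (1, ℓ^m)ᵀ as an eigenvector: g·(1, ℓ^m)ᵀ = λ·(1, ℓ^m)ᵀ for some λ ∈ Z/ℓ^{2m+1}Z. In other words, the index-2 subgroup of R(ℓ^{2m+1}) consisting of the elements with ε = +1 is contained in the Borel subgroup fixing the line spanned by (1, ℓ^m)ᵀ. -/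
/-- Every `g ∈ GL₂(ℤ/ℓ^(2m+1)ℤ)` of the form `[[r, s],[ℓ^(2m)·s, t]]`
with `r ≡ t (mod ℓ^(m+1))` (i.e. every element of the index-2 subgroup of `R(ℓ^(2m+1))`
with `ε = +1`) has `(1, ℓᵐ)ᵀ` as an eigenvector. -/
theorem stmt_12 (ℓ m : ℕ) (hℓ : ℓ.Prime) (hℓodd : ℓ ≠ 2) (hm : 1 ≤ m)
    (g : Matrix.GeneralLinearGroup (Fin 2) (ZMod (ℓ ^ (2 * m + 1))))
    (r s t : ZMod (ℓ ^ (2 * m + 1)))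
    (hg : g.val = !![r, s; (ℓ : ZMod (ℓ ^ (2 * m + 1))) ^ (2 * m) * s, t])
    (hrt : ZMod.castHom (pow_dvd_pow ℓ (by omega : m + 1 ≤ 2 * m + 1)) (ZMod (ℓ ^ (m + 1))) r =
      ZMod.castHom (pow_dvd_pow ℓ (by omega : m + 1 ≤ 2 * m + 1)) (ZMod (ℓ ^ (m + 1))) t) :
    ∃ lam : ZMod (ℓ ^ (2 * m + 1)),
      g.val.mulVec ![1, (ℓ : ZMod (ℓ ^ (2 * m + 1))) ^ m]
        = lam • ![1, (ℓ : ZMod (ℓ ^ (2 * m + 1))) ^ m] := by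
  haveI : NeZero (ℓ ^ (2 * m + 1)) := ⟨pow_ne_zero _ hℓ.ne_zero⟩
  set L : ZMod (ℓ ^ (2 * m + 1)) := (ℓ : ZMod (ℓ ^ (2 * m + 1)))
  have key : (r - t) * L ^ m = 0 := by
    have h0 : ZMod.castHom (pow_dvd_pow ℓ (by omega : m + 1 ≤ 2 * m + 1))
        (ZMod (ℓ ^ (m + 1))) (r - t) = 0 := by rw [map_sub, hrt, sub_self]
    have h1 : (ℓ ^ (m+1) : ℕ) ∣ (r - t).val := by
      rwa [ZMod.castHom_apply, ← ZMod.natCast_val,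
        ZMod.natCast_eq_zero_iff] at h0
    obtain ⟨k, hk⟩ := h1
    have : (r - t) = ((r - t).val : ZMod (ℓ ^ (2 * m + 1))) := by
      rw [ZMod.natCast_val, ZMod.cast_id]
    rw [this, hk]
    push_cast
    have hz : ((ℓ : ZMod (ℓ ^ (2 * m + 1))) ^ (2*m+1)) = 0 := by
      rw [← Nat.cast_pow, ZMod.natCast_self]
    calc (L ^ (m+1) * (k:ZMod (ℓ ^ (2*m+1)))) * L ^ m
        = L ^ (2*m+1) * k := by ring
      _ = 0 := by rw [hz, zero_mul]
  refine ⟨r + s * L ^ m, ?_⟩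
  funext i
  fin_cases i <;>
    simp [hg, Matrix.mulVec, dotProduct, Fin.sum_univ_two] <;>
    ring_nf
  linear_combination -key
end

section
/- Let ℓ be an odd prime, j ≥ 1, and n = 2j + 1. Let X ∈ GL₂(Z/ℓⁿZ) be of the form X = [[a + ℓʲ·x, b],[ℓ^{2j}·ζ, a + ℓʲ·w]] for integers a, x, b, ζ, w with ℓ ∤ b. If Δ(X) is a square in Z/ℓⁿZ, then there exist an integer k and λ ∈ Z/ℓⁿZ such that X·(1, k·ℓʲ)ᵀ = λ·(1, k·ℓʲ)ᵀ, i.e. X has an eigenvector of the form (1, k·ℓʲ)ᵀ. -/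
/-- For an odd prime `ℓ`, `n = 2j+1`, and
`X = [[a + ℓʲx, b],[ℓ^(2j)ζ, a + ℓʲw]] ∈ GL₂(ℤ/ℓⁿℤ)` with `ℓ ∤ b`: if `Δ(X)` is a square
mod `ℓⁿ`, then `X` has an eigenvector of the form `(1, kℓʲ)ᵀ`. -/
theorem stmt_13 (ℓ j : ℕ) (hℓ : ℓ.Prime) (hℓodd : ℓ ≠ 2) (hj : 1 ≤ j)
    (X : Matrix.GeneralLinearGroup (Fin 2) (ZMod (ℓ ^ (2 * j + 1))))
    (a x b ζ w : ℤ) (hb : ¬ (ℓ : ℤ) ∣ b)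
    (hX : X.val = !![(a : ZMod (ℓ ^ (2 * j + 1))) + (ℓ : ZMod (ℓ ^ (2 * j + 1))) ^ j * (x : ZMod (ℓ ^ (2 * j + 1))),
        (b : ZMod (ℓ ^ (2 * j + 1)));
        (ℓ : ZMod (ℓ ^ (2 * j + 1))) ^ (2 * j) * (ζ : ZMod (ℓ ^ (2 * j + 1))),
        (a : ZMod (ℓ ^ (2 * j + 1))) + (ℓ : ZMod (ℓ ^ (2 * j + 1))) ^ j * (w : ZMod (ℓ ^ (2 * j + 1)))])
    (hsq : ∃ s : ZMod (ℓ ^ (2 * j + 1)),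
      (Matrix.trace X.val) ^ 2 - 4 * X.val.det = s ^ 2) :
    ∃ (k : ℤ) (lam : ZMod (ℓ ^ (2 * j + 1))),
      X.val.mulVec ![1, (k : ZMod (ℓ ^ (2 * j + 1))) * (ℓ : ZMod (ℓ ^ (2 * j + 1))) ^ j]
        = lam • ![1, (k : ZMod (ℓ ^ (2 * j + 1))) * (ℓ : ZMod (ℓ ^ (2 * j + 1))) ^ j] := by
  haveI : Fact ℓ.Prime := ⟨hℓ⟩
  set N := ℓ ^ (2 * j + 1) with hN
  haveI : NeZero N := ⟨pow_ne_zero _ hℓ.ne_zero⟩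
  obtain ⟨s, hs⟩ := hsq
  set D : ℤ := (x - w) ^ 2 + 4 * b * ζ with hDdef
  have hD : s ^ 2 = ((ℓ ^ (2 * j) * D : ℤ) : ZMod N) := by
    rw [← hs, hX, Matrix.trace_fin_two_of, Matrix.det_fin_two_of, hDdef]
    push_cast
    ring
  set s₀ : ℤ := (s.val : ℤ) with hs₀
  have hs₀cast : ((s₀ : ℤ) : ZMod N) = s := by
    rw [hs₀]; push_cast; simp [ZMod.natCast_val, ZMod.cast_id]
  have hdvd : (N : ℤ) ∣ s₀ ^ 2 - ℓ ^ (2 * j) * D := by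
    rw [← ZMod.intCast_zmod_eq_zero_iff_dvd]
    push_cast
    rw [hs₀cast, hD]
    push_cast
    ring
  have hdvds : (ℓ : ℤ) ^ (2 * j) ∣ s₀ ^ 2 := by
    have h1 : (ℓ : ℤ) ^ (2 * j) ∣ (N : ℤ) := by
      rw [hN]; push_cast; exact pow_dvd_pow _ (by omega)
    have h2 := h1.trans hdvd
    have h3 : (ℓ : ℤ) ^ (2 * j) ∣ (s₀ ^ 2 - ℓ ^ (2 * j) * D) + ℓ ^ (2 * j) * D :=
      dvd_add h2 (Dvd.intro _ rfl)
    simpa using h3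
  have hjdvd : (ℓ : ℤ) ^ j ∣ s₀ := by
    rcases eq_or_ne s₀ 0 with h0 | h0
    · simp [h0]
    · have hm : ℓ ^ (2 * j) ∣ s₀.natAbs ^ 2 := by
        have := Int.natAbs_dvd_natAbs.mpr hdvds
        simpa [Int.natAbs_pow] using this
      have hmne : s₀.natAbs ^ 2 ≠ 0 := by
        simp [pow_eq_zero_iff, Int.natAbs_eq_zero, h0]
      have hle : 2 * j ≤ (s₀.natAbs ^ 2).factorization ℓ :=
        (Nat.Prime.pow_dvd_iff_le_factorization hℓ hmne).mp hm
      rw [Nat.factorization_pow] at hle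
      have hle2 : j ≤ s₀.natAbs.factorization ℓ := by
        simp at hle; omega
      have h4 : ℓ ^ j ∣ s₀.natAbs :=
        (Nat.Prime.pow_dvd_iff_le_factorization hℓ (by simpa using h0)).mpr hle2
      have h4' : ((ℓ : ℤ) ^ j).natAbs ∣ s₀.natAbs := by
        simpa [Int.natAbs_pow] using h4
      exact Int.natAbs_dvd_natAbs.mp h4'
  obtain ⟨t, ht⟩ := hjdvd
  have hcancel : (ℓ : ℤ) ∣ t ^ 2 - D := by
    have h1 : ((ℓ : ℤ) ^ (2 * j)) * (ℓ : ℤ) ∣ ((ℓ : ℤ) ^ (2 * j)) * (t ^ 2 - D) := by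
      have hNe : (N : ℤ) = (ℓ : ℤ) ^ (2 * j) * ℓ := by rw [hN]; push_cast; ring
      rw [← hNe]
      have h2 := hdvd
      rw [ht] at h2
      convert h2 using 1
      ring
    exact (mul_dvd_mul_iff_left (pow_ne_zero _ (by exact_mod_cast hℓ.ne_zero))).mp h1
  have hT : (t : ZMod ℓ) ^ 2 = ((x : ZMod ℓ) - w) ^ 2 + 4 * b * ζ := by
    have h0 : ((t ^ 2 - D : ℤ) : ZMod ℓ) = 0 :=
      (ZMod.intCast_zmod_eq_zero_iff_dvd _ _).mpr hcancel
    rw [hDdef] at h0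
    push_cast at h0
    linear_combination h0
  -- solve the quadratic mod ℓ
  have hbne : (b : ZMod ℓ) ≠ 0 := by
    rw [Ne, ZMod.intCast_zmod_eq_zero_iff_dvd]
    exact_mod_cast hb
  have h2ne : (2 : ZMod ℓ) ≠ 0 := by
    intro h
    have h2 : (ℓ : ℤ) ∣ 2 := (ZMod.intCast_zmod_eq_zero_iff_dvd 2 ℓ).mp (by exact_mod_cast h)
    have h2' : ℓ ∣ 2 := by exact_mod_cast h2
    have := Nat.le_of_dvd (by norm_num) h2'
    have := hℓ.two_le
    omega
  have h2bne : (2 : ZMod ℓ) * b ≠ 0 := mul_ne_zero h2ne hbne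
  set u : ZMod ℓ := ((2 : ZMod ℓ) * b)⁻¹ with hu
  have huu : (2 : ZMod ℓ) * b * u = 1 := mul_inv_cancel₀ h2bne
  set K : ZMod ℓ := ((w : ZMod ℓ) - x + t) * u with hK
  set k : ℤ := (K.val : ℤ) with hk
  have hkcast : ((k : ℤ) : ZMod ℓ) = K := by
    rw [hk]; push_cast; simp [ZMod.natCast_val, ZMod.cast_id]
  have hkey : (2 : ZMod ℓ) * b * K = (w : ZMod ℓ) - x + t := by
    rw [hK]
    calc (2 : ZMod ℓ) * b * (((w : ZMod ℓ) - x + t) * u)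
        = ((2 : ZMod ℓ) * b * u) * ((w : ZMod ℓ) - x + t) := by ring
      _ = (w : ZMod ℓ) - x + t := by rw [huu]; ring
  have hquad : (b : ZMod ℓ) * K ^ 2 + ((x : ZMod ℓ) - w) * K - ζ = 0 := by
    have h4 : (4 : ZMod ℓ) * b * ((b : ZMod ℓ) * K ^ 2 + ((x : ZMod ℓ) - w) * K - ζ) = 0 := by
      linear_combination (2 * (b : ZMod ℓ) * K + ((x : ZMod ℓ) - w) + t) * hkey + hT
    have h4bne : (4 : ZMod ℓ) * b ≠ 0 := by
      have h4' : (4 : ZMod ℓ) = 2 * 2 := by norm_num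
      rw [h4']
      exact mul_ne_zero (mul_ne_zero h2ne h2ne) hbne
    rcases mul_eq_zero.mp h4 with h | h
    · exact absurd h h4bne
    · exact h
  have hdvdk : (ℓ : ℤ) ∣ b * k ^ 2 + (x - w) * k - ζ := by
    rw [← ZMod.intCast_zmod_eq_zero_iff_dvd]
    push_cast
    rw [hkcast]
    linear_combination hquad
  -- key zero identity mod N
  have hzero : ((ℓ : ZMod N)) ^ (2 * j) *
      ((b : ZMod N) * k ^ 2 + ((x : ZMod N) - w) * k - ζ) = 0 := by
    have : ((ℓ ^ (2 * j) * (b * k ^ 2 + (x - w) * k - ζ) : ℤ) : ZMod N) = 0 := by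
      rw [ZMod.intCast_zmod_eq_zero_iff_dvd]
      have hNe : (N : ℤ) = (ℓ : ℤ) ^ (2 * j) * ℓ := by rw [hN]; push_cast; ring
      rw [hNe]
      exact mul_dvd_mul_left _ hdvdk
    push_cast at this
    linear_combination this
  refine ⟨k, (a : ZMod N) + (ℓ : ZMod N) ^ j * x + b * (k * (ℓ : ZMod N) ^ j), ?_⟩
  funext i
  fin_cases i <;>
    simp [hX, Matrix.mulVec, Matrix.vecHead, Matrix.vecTail, Fin.sum_univ_two,
      dotProduct]
  linear_combination -hzero
end

section
/- Let ℓ be an odd prime, and in GL₂(Z/ℓ³Z) let M = [[1, 1],[ℓ², 1]] and X = [[1, 0],[0, −1]], and let H be the subgroup generated by M and X. Then: (a) every element h ∈ H has an eigenvector, i.e. there exist a primitive vector v ∈ (Z/ℓ³Z)² and λ ∈ Z/ℓ³Z with h·v = λ·v; but (b) there is no primitive vector in (Z/ℓ³Z)² that is a simultaneous eigenvector of all elements of H. -/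
section Aux

variable {ℓ : ℕ}

lemma aux_unit_of_cast (hℓ : ℓ.Prime) (hd : ℓ ∣ ℓ^3) (x : ZMod (ℓ^3))
    (h : ZMod.castHom hd (ZMod ℓ) x ≠ 0) : IsUnit x := by
  haveI : NeZero (ℓ^3) := ⟨pow_ne_zero _ hℓ.ne_zero⟩
  have hx : ((x.val : ℕ) : ZMod (ℓ^3)) = x := ZMod.natCast_rightInverse x
  rw [← hx, ZMod.isUnit_iff_coprime]
  have hnd : ¬ ℓ ∣ x.val := by
    intro hdvd
    exact h (by rw [← hx, map_natCast]; exact (ZMod.natCast_eq_zero_iff _ _).mpr hdvd)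
  exact (hℓ.coprime_iff_not_dvd.mpr hnd).symm.pow_right _

lemma aux_two_unit (hℓ : ℓ.Prime) (hodd : ℓ ≠ 2) : IsUnit (2 : ZMod (ℓ^3)) := by
  have : ((2 : ℕ) : ZMod (ℓ^3)) = (2 : ZMod (ℓ^3)) := by norm_num
  rw [← this, ZMod.isUnit_iff_coprime]
  exact (Nat.coprime_primes Nat.prime_two hℓ |>.mpr (Ne.symm hodd)).pow_right _

lemma aux_L3 (hℓ : ℓ.Prime) : ((ℓ : ZMod (ℓ^3)))^3 = 0 := by
  have : (((ℓ^3 : ℕ)) : ZMod (ℓ^3)) = 0 := ZMod.natCast_self _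
  push_cast at this
  exact this

lemma aux_L2_ne (hℓ : ℓ.Prime) : ((ℓ : ZMod (ℓ^3)))^2 ≠ 0 := by
  have h2 := hℓ.two_le
  intro h
  have : (((ℓ^2 : ℕ)) : ZMod (ℓ^3)) = 0 := by push_cast; exact h
  rw [ZMod.natCast_eq_zero_iff] at this
  have := Nat.le_of_dvd (by positivity) this
  exact absurd this (by nlinarith)

end Aux

/-- In `GL₂(ℤ/ℓ³ℤ)` let `M = [[1, 1],[ℓ², 1]]` and `X = [[1, 0],[0, -1]]`,
and let `H = ⟨M, X⟩`.  Then every element of `H` has a primitive eigenvector, but there is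
no primitive vector that is a simultaneous eigenvector of all elements of `H`. -/
theorem stmt_16 (ℓ : ℕ) (hℓ : ℓ.Prime) (hℓodd : ℓ ≠ 2)
    (M X : Matrix.GeneralLinearGroup (Fin 2) (ZMod (ℓ ^ 3)))
    (hM : M.val = !![1, 1; (ℓ : ZMod (ℓ ^ 3)) ^ 2, 1])
    (hX : X.val = !![1, 0; 0, -1]) :
    (∀ h ∈ Subgroup.closure ({M, X} : Set (Matrix.GeneralLinearGroup (Fin 2) (ZMod (ℓ ^ 3)))),
      ∃ (v : Fin 2 → ZMod (ℓ ^ 3)) (lam : ZMod (ℓ ^ 3)),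
        IsPrimitive ℓ (ℓ ^ 3) (dvd_pow_self ℓ (by omega : (3 : ℕ) ≠ 0)) v ∧
        h.val.mulVec v = lam • v) ∧
    ¬ ∃ v : Fin 2 → ZMod (ℓ ^ 3),
      IsPrimitive ℓ (ℓ ^ 3) (dvd_pow_self ℓ (by omega : (3 : ℕ) ≠ 0)) v ∧
      ∀ h ∈ Subgroup.closure ({M, X} : Set (Matrix.GeneralLinearGroup (Fin 2) (ZMod (ℓ ^ 3)))),
        ∃ lam : ZMod (ℓ ^ 3), h.val.mulVec v = lam • v := by
  haveI : Fact ℓ.Prime := ⟨hℓ⟩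
  set R := ZMod (ℓ ^ 3) with hRdef
  have hdvd : ℓ ∣ ℓ ^ 3 := dvd_pow_self ℓ (by omega)
  set π := ZMod.castHom hdvd (ZMod ℓ) with hπdef
  obtain ⟨L, hLdef⟩ : ∃ L : R, L = (ℓ : R) ^ 2 := ⟨_, rfl⟩
  rw [show ((ℓ : R) ^ 2) = L from hLdef.symm] at hM
  have hπL : π L = 0 := by
    rw [hLdef]; rw [map_pow, map_natCast, ZMod.natCast_self, zero_pow]; norm_num
  have h2 : IsUnit (2 : R) := aux_two_unit hℓ hℓodd
  have hLL : L * L = 0 := by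
    rw [hLdef, ← pow_add]
    have : (ℓ : R) ^ 4 = (ℓ:R)^3 * ℓ := by ring
    rw [this, aux_L3 hℓ, zero_mul]
  have hπ2 : (π 2 : ZMod ℓ) ≠ 0 := (h2.map π).ne_zero
  -- the invariant
  have hP : ∀ g ∈ Subgroup.closure ({M, X} : Set (Matrix.GeneralLinearGroup (Fin 2) R)),
      ∃ a b : R, g.val = !![a, b; L * b, a] ∨ g.val = !![a, -b; L * b, -a] := by
    intro g hg
    induction hg using Subgroup.closure_induction with
    | mem x hx =>
      rcases hx with h | h
      · exact ⟨1, 1, Or.inl (by subst h; rw [hM]; ext i j; fin_cases i <;> fin_cases j <;> simp [hLdef])⟩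
      · simp only [Set.mem_singleton_iff] at h
        exact ⟨1, 0, Or.inr (by subst h; rw [hX]; ext i j; fin_cases i <;> fin_cases j <;> simp)⟩
    | one => exact ⟨1, 0, Or.inl (by ext i j; fin_cases i <;> fin_cases j <;> simp [Matrix.one_apply])⟩
    | mul x y hx hy ihx ihy =>
      obtain ⟨a, b, hab⟩ := ihx
      obtain ⟨c, d, hcd⟩ := ihy
      have hxy : (x * y).val = x.val * y.val := rfl
      rcases hab with h1 | h1 <;> rcases hcd with h2 | h2
      · exact ⟨a * c + L * (b * d), a * d + b * c, Or.inl (by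
          rw [hxy, h1, h2, Matrix.mul_fin_two]
          ext i j; fin_cases i <;> fin_cases j <;> simp <;> ring)⟩
      · exact ⟨a * c + L * (b * d), a * d + b * c, Or.inr (by
          rw [hxy, h1, h2, Matrix.mul_fin_two]
          ext i j; fin_cases i <;> fin_cases j <;> simp <;> ring)⟩
      · exact ⟨a * c - L * (b * d), b * c - a * d, Or.inr (by
          rw [hxy, h1, h2, Matrix.mul_fin_two]
          ext i j; fin_cases i <;> fin_cases j <;> simp <;> ring)⟩
      · exact ⟨a * c - L * (b * d), b * c - a * d, Or.inl (by
          rw [hxy, h1, h2, Matrix.mul_fin_two]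
          ext i j; fin_cases i <;> fin_cases j <;> simp <;> ring)⟩
    | inv x hx ihx =>
      obtain ⟨a, b, hab⟩ := ihx
      have hxu : IsUnit x.val := x.isUnit
      have hdet : IsUnit (x.val.det) := (Matrix.isUnit_iff_isUnit_det _).mp hxu
      have hinv : ∀ B : Matrix (Fin 2) (Fin 2) R, x.val * B = 1 → (x⁻¹).val = B := by
        intro B hB
        calc (x⁻¹).val = (x⁻¹).val * (x.val * B) := by rw [hB, mul_one]
        _ = B := by rw [← mul_assoc, Units.inv_mul, one_mul]
      rcases hab with h1 | h1
      · have hd : IsUnit (a * a - L * (b * b)) := by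
          have : x.val.det = a * a - L * (b * b) := by rw [h1, Matrix.det_fin_two_of]; ring
          rwa [this] at hdet
        obtain ⟨u, hu⟩ := hd
        obtain ⟨e, hedef⟩ : ∃ e : R, e = ((u⁻¹ : Rˣ) : R) := ⟨_, rfl⟩
        have hud : e * (a * a - L * (b * b)) = 1 := by rw [hedef, ← hu]; exact u.inv_mul
        refine ⟨e * a, -(e * b), Or.inl ?_⟩
        rw [hinv !![e * a, -(e*b); L * -(e * b), e * a] ?_]
        rw [h1, Matrix.mul_fin_two]
        ext i j; fin_cases i <;> fin_cases j <;> simp <;> first | ring1 | linear_combination hud | linear_combination -hud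
      · have hd : IsUnit (a * a - L * (b * b)) := by
          have : x.val.det = -(a * a - L * (b * b)) := by rw [h1, Matrix.det_fin_two_of]; ring
          rw [this] at hdet
          have := hdet.neg
          rwa [neg_neg] at this
        obtain ⟨u, hu⟩ := hd
        obtain ⟨e, hedef⟩ : ∃ e : R, e = ((u⁻¹ : Rˣ) : R) := ⟨_, rfl⟩
        have hud : e * (a * a - L * (b * b)) = 1 := by rw [hedef, ← hu]; exact u.inv_mul
        refine ⟨e * a, e * b, Or.inr ?_⟩
        rw [hinv !![e * a, -(e*b); L * (e * b), -(e * a)] ?_]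
        rw [h1, Matrix.mul_fin_two]
        ext i j; fin_cases i <;> fin_cases j <;> simp <;> first | ring1 | linear_combination hud | linear_combination -hud
  have mulVec_comp : ∀ (p q r s x y lam : R), p * x + q * y = lam * x → r * x + s * y = lam * y →
      (!![p, q; r, s]).mulVec ![x, y] = lam • ![x, y] := by
    intro p q r s x y lam h0 h1
    funext i
    fin_cases i
    · simpa [Matrix.mulVec, dotProduct, Fin.sum_univ_two] using h0
    · simpa [Matrix.mulVec, dotProduct, Fin.sum_univ_two] using h1
  constructor
  · -- part (a)
    intro h hh
    obtain ⟨a, b, hab⟩ := hP h hh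
    rcases hab with h1 | h1
    · refine ⟨![1, (ℓ : R)], a + b * (ℓ : R), ?_, ?_⟩
      · intro hz
        have h0 := congrFun hz 0
        simp only [Matrix.cons_val_zero, map_one] at h0
        exact one_ne_zero h0
      · rw [h1]
        apply mulVec_comp
        · ring
        · linear_combination b * hLdef
    · -- type 2
      have hdet : IsUnit ((h.val).det) := (Matrix.isUnit_iff_isUnit_det _).mp h.isUnit
      have hd : IsUnit (a * a - L * (b * b)) := by
        have : (h.val).det = -(a * a - L * (b * b)) := by rw [h1, Matrix.det_fin_two_of]; ring
        rw [this] at hdet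
        have := hdet.neg
        rwa [neg_neg] at this
      have hπa : π a ≠ 0 := by
        have hπd : π (a * a - L * (b * b)) ≠ 0 := (hd.map π).ne_zero
        intro h0
        apply hπd
        rw [map_sub, map_mul, map_mul, hπL, h0, mul_zero, zero_mul, sub_zero]
      have ha : IsUnit a := aux_unit_of_cast hℓ hdvd a hπa
      obtain ⟨u, hu⟩ := h2.mul ha
      obtain ⟨e, hedef⟩ : ∃ e : R, e = ((u⁻¹ : Rˣ) : R) := ⟨_, rfl⟩
      have hud : e * (2 * a) = 1 := by rw [hedef, ← hu]; exact u.inv_mul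
      refine ⟨![a + (a - b * b * L * e), L * b], a - b * b * L * e, ?_, ?_⟩
      · intro hz
        have h0 := congrFun hz 0
        simp only [Matrix.cons_val_zero, Pi.zero_apply] at h0
        have hrw : a + (a - b * b * L * e) = 2 * a - b * b * e * L := by ring
        rw [hrw, map_sub, map_mul, map_mul, hπL, mul_zero, sub_zero] at h0
        exact mul_ne_zero ((h2.map π).ne_zero) hπa h0
      · rw [h1]
        apply mulVec_comp
        · linear_combination b ^ 2 * L * hud - b ^ 4 * e ^ 2 * hLL
        · ring
  · -- part (b)
    rintro ⟨v, hvprim, hvall⟩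
    have hMmem : M ∈ Subgroup.closure ({M, X} : Set (Matrix.GeneralLinearGroup (Fin 2) R)) :=
      Subgroup.subset_closure (Set.mem_insert _ _)
    have hXmem : X ∈ Subgroup.closure ({M, X} : Set (Matrix.GeneralLinearGroup (Fin 2) R)) :=
      Subgroup.subset_closure (Set.mem_insert_of_mem _ rfl)
    obtain ⟨mu, hmu⟩ := hvall M hMmem
    obtain ⟨lam, hlam⟩ := hvall X hXmem
    rw [hM] at hmu
    rw [hX] at hlam
    have e0 := congrFun hmu 0
    have e1 := congrFun hmu 1
    have f0 := congrFun hlam 0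
    have f1 := congrFun hlam 1
    simp only [Matrix.mulVec, dotProduct, Fin.sum_univ_two, Matrix.cons_val_zero,
      Matrix.cons_val_one, Matrix.head_cons, Matrix.of_apply, Matrix.cons_val', Matrix.empty_val',
      Matrix.cons_val_fin_one, Matrix.head_fin_const, one_mul, zero_mul, add_zero, zero_add,
      neg_mul, Pi.smul_apply, smul_eq_mul] at e0 e1 f0 f1
    have hne : π (v 0) ≠ 0 ∨ π (v 1) ≠ 0 := by
      by_contra hcon
      push_neg at hcon
      apply hvprim
      funext i
      fin_cases i
      · exact hcon.1
      · exact hcon.2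
    rcases hne with hx | hy
    · have hπlam : π lam = 1 := by
        have := congrArg π f0
        rw [map_mul] at this
        have h1' : π lam * π (v 0) = 1 * π (v 0) := by rw [one_mul, ← this]
        exact mul_right_cancel₀ hx h1'
      have hu1 : IsUnit (lam + 1) := by
        apply aux_unit_of_cast hℓ hdvd
        have : π (lam + 1) = 2 := by rw [map_add, map_one, hπlam]; norm_num
        rw [this]
        have : ((2 : ZMod ℓ)) = π 2 := by rw [map_ofNat]
        rw [this]
        exact hπ2
      have hy0 : v 1 = 0 := by
        have hz : (lam + 1) * v 1 = (lam + 1) * 0 := by rw [mul_zero]; linear_combination -f1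
        exact hu1.mul_left_cancel hz
      have hL0 : L * v 0 = 0 := by
        rw [hy0, mul_zero] at e1
        linear_combination e1
      have hv0 : IsUnit (v 0) := aux_unit_of_cast hℓ hdvd _ hx
      have : L = 0 := by
        have hz : v 0 * L = v 0 * 0 := by rw [mul_zero]; linear_combination hL0
        exact hv0.mul_left_cancel hz
      rw [hLdef] at this
      exact aux_L2_ne hℓ this
    · have hπlam : π lam = -1 := by
        have := congrArg π f1
        rw [map_mul, map_neg] at this
        have h1' : π lam * π (v 1) = (-1) * π (v 1) := by rw [neg_one_mul, ← this]
        exact mul_right_cancel₀ hy h1'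
      have hu1 : IsUnit (lam - 1) := by
        apply aux_unit_of_cast hℓ hdvd
        have h2' : π (lam - 1) = -2 := by rw [map_sub, map_one, hπlam]; norm_num
        rw [h2']
        intro hcon
        apply hπ2
        have : ((2 : ZMod ℓ)) = π 2 := by rw [map_ofNat]
        rw [← this]
        linear_combination -hcon
      have hx0 : v 0 = 0 := by
        have hz : (lam - 1) * v 0 = (lam - 1) * 0 := by rw [mul_zero]; linear_combination -f0
        exact hu1.mul_left_cancel hz
      apply hy
      have : v 1 = 0 := by
        rw [hx0, mul_zero] at e0
        linear_combination e0
      rw [this, map_zero]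
end

section
/- Let ℓ = 5 or ℓ = 7, and let α be a generator of the cyclic group (Z/ℓZ)ˣ. Let g ∈ GL₂(Z/ℓ²Z) be a matrix whose reduction modulo ℓ is of the form [[αⁱ, 0],[0, αʲ]] or [[0, αⁱ],[αʲ, 0]] with i ≡ j (mod 2). Then Δ(g) is a square in Z/ℓ²Z. -/
lemma lift5' : ∀ x : ZMod (5^2), (∃ t : ZMod 5, t ≠ 0 ∧
    ZMod.castHom (dvd_pow_self 5 (by norm_num : (2:ℕ) ≠ 0)) (ZMod 5) x = t^2) →
    ∃ s : ZMod (5^2), x = s^2 := by decide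

lemma zero5' : ∀ u v : ZMod (5^2),
    ZMod.castHom (dvd_pow_self 5 (by norm_num : (2:ℕ) ≠ 0)) (ZMod 5) u = 0 →
    ZMod.castHom (dvd_pow_self 5 (by norm_num : (2:ℕ) ≠ 0)) (ZMod 5) v = 0 → u * v = 0 := by
  decide

lemma lift7' : ∀ x : ZMod (7^2), (∃ t : ZMod 7, t ≠ 0 ∧
    ZMod.castHom (dvd_pow_self 7 (by norm_num : (2:ℕ) ≠ 0)) (ZMod 7) x = t^2) →
    ∃ s : ZMod (7^2), x = s^2 := by decide

lemma zero7' : ∀ u v : ZMod (7^2),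
    ZMod.castHom (dvd_pow_self 7 (by norm_num : (2:ℕ) ≠ 0)) (ZMod 7) u = 0 →
    ZMod.castHom (dvd_pow_self 7 (by norm_num : (2:ℕ) ≠ 0)) (ZMod 7) v = 0 → u * v = 0 := by
  decide

theorem aux17 (p : ℕ) [Fact (Nat.Prime p)] (h2 : (2 : ZMod p) ≠ 0)
    (lift : ∀ x : ZMod (p^2), (∃ t : ZMod p, t ≠ 0 ∧
      ZMod.castHom (dvd_pow_self p (by norm_num : (2:ℕ) ≠ 0)) (ZMod p) x = t^2) →
      ∃ s : ZMod (p^2), x = s^2)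
    (zero : ∀ u v : ZMod (p^2),
      ZMod.castHom (dvd_pow_self p (by norm_num : (2:ℕ) ≠ 0)) (ZMod p) u = 0 →
      ZMod.castHom (dvd_pow_self p (by norm_num : (2:ℕ) ≠ 0)) (ZMod p) v = 0 → u * v = 0)
    (α : (ZMod p)ˣ)
    (g : Matrix.GeneralLinearGroup (Fin 2) (ZMod (p ^ 2)))
    (hg : ∃ i j : ℕ, i % 2 = j % 2 ∧
      (g.val.map (ZMod.castHom (dvd_pow_self p (by norm_num : (2 : ℕ) ≠ 0)) (ZMod p))
          = !![((α ^ i : (ZMod p)ˣ) : ZMod p), 0; 0, ((α ^ j : (ZMod p)ˣ) : ZMod p)] ∨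
        g.val.map (ZMod.castHom (dvd_pow_self p (by norm_num : (2 : ℕ) ≠ 0)) (ZMod p))
          = !![0, ((α ^ i : (ZMod p)ˣ) : ZMod p); ((α ^ j : (ZMod p)ˣ) : ZMod p), 0])) :
    ∃ s : ZMod (p ^ 2), (Matrix.trace g.val) ^ 2 - 4 * g.val.det = s ^ 2 := by
  obtain ⟨i, j, hij, h | h⟩ := hg
  · rw [← Matrix.ext_iff] at h
    set π := ZMod.castHom (dvd_pow_self p (by norm_num : (2:ℕ) ≠ 0)) (ZMod p) with hπ
    have ha : π (g.val 0 0) = ((α ^ i : (ZMod p)ˣ) : ZMod p) := by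
      have := h 0 0; simpa [Matrix.map_apply] using this
    have hb : π (g.val 0 1) = 0 := by have := h 0 1; simpa [Matrix.map_apply] using this
    have hc : π (g.val 1 0) = 0 := by have := h 1 0; simpa [Matrix.map_apply] using this
    have hd : π (g.val 1 1) = ((α ^ j : (ZMod p)ˣ) : ZMod p) := by
      have := h 1 1; simpa [Matrix.map_apply] using this
    rw [Matrix.trace_fin_two, Matrix.det_fin_two]
    by_cases heq : ((α ^ i : (ZMod p)ˣ) : ZMod p) = ((α ^ j : (ZMod p)ˣ) : ZMod p)
    · refine ⟨0, ?_⟩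
      have e1 : (g.val 0 0 - g.val 1 1) * (g.val 0 0 - g.val 1 1) = 0 := by
        apply zero <;> simp [map_sub, ha, hd, heq]
      have e2 : g.val 0 1 * g.val 1 0 = 0 := zero _ _ hb hc
      have : (g.val 0 0 + g.val 1 1) ^ 2 - 4 * (g.val 0 0 * g.val 1 1 - g.val 0 1 * g.val 1 0)
          = (g.val 0 0 - g.val 1 1) * (g.val 0 0 - g.val 1 1) + 4 * (g.val 0 1 * g.val 1 0) := by
        ring
      rw [this, e1, e2]; ring
    · apply lift
      refine ⟨((α ^ i : (ZMod p)ˣ) : ZMod p) - ((α ^ j : (ZMod p)ˣ) : ZMod p),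
        sub_ne_zero.mpr heq, ?_⟩
      simp only [map_sub, map_pow, map_add, map_ofNat, ha, hb, hc, hd, map_mul]
      ring
  · rw [← Matrix.ext_iff] at h
    set π := ZMod.castHom (dvd_pow_self p (by norm_num : (2:ℕ) ≠ 0)) (ZMod p) with hπ
    have ha : π (g.val 0 0) = 0 := by have := h 0 0; simpa [Matrix.map_apply] using this
    have hb : π (g.val 0 1) = ((α ^ i : (ZMod p)ˣ) : ZMod p) := by
      have := h 0 1; simpa [Matrix.map_apply] using this
    have hc : π (g.val 1 0) = ((α ^ j : (ZMod p)ˣ) : ZMod p) := by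
      have := h 1 0; simpa [Matrix.map_apply] using this
    have hd : π (g.val 1 1) = 0 := by have := h 1 1; simpa [Matrix.map_apply] using this
    rw [Matrix.trace_fin_two, Matrix.det_fin_two]
    obtain ⟨k, hk⟩ : ∃ k, i + j = 2 * k := ⟨(i+j)/2, by omega⟩
    apply lift
    refine ⟨2 * ((α ^ k : (ZMod p)ˣ) : ZMod p), ?_, ?_⟩
    · exact mul_ne_zero h2 (Units.ne_zero _)
    · simp only [map_sub, map_pow, map_add, map_ofNat, ha, hb, hc, hd, map_mul]
      have : ((α ^ i : (ZMod p)ˣ) : ZMod p) * ((α ^ j : (ZMod p)ˣ) : ZMod p)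
          = ((α ^ k : (ZMod p)ˣ) : ZMod p) * ((α ^ k : (ZMod p)ˣ) : ZMod p) := by
        rw [← Units.val_mul, ← Units.val_mul, ← pow_add, ← pow_add, hk, two_mul]
      linear_combination 4 * this


/-- Let `ℓ = 5` or `ℓ = 7`, and let `α` generate `(ℤ/ℓℤ)ˣ`.  If
`g ∈ GL₂(ℤ/ℓ²ℤ)` reduces mod `ℓ` to `[[αⁱ, 0],[0, αʲ]]` or `[[0, αⁱ],[αʲ, 0]]` with
`i ≡ j (mod 2)`, then `Δ(g)` is a square in `ℤ/ℓ²ℤ`. -/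
theorem stmt_17 (ℓ : ℕ) (hℓ : ℓ = 5 ∨ ℓ = 7) (α : (ZMod ℓ)ˣ)
    (hα : ∀ u : (ZMod ℓ)ˣ, u ∈ Subgroup.zpowers α)
    (g : Matrix.GeneralLinearGroup (Fin 2) (ZMod (ℓ ^ 2)))
    (hg : ∃ i j : ℕ, i % 2 = j % 2 ∧
      (g.val.map (ZMod.castHom (dvd_pow_self ℓ (by omega : (2 : ℕ) ≠ 0)) (ZMod ℓ))
          = !![((α ^ i : (ZMod ℓ)ˣ) : ZMod ℓ), 0; 0, ((α ^ j : (ZMod ℓ)ˣ) : ZMod ℓ)] ∨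
        g.val.map (ZMod.castHom (dvd_pow_self ℓ (by omega : (2 : ℕ) ≠ 0)) (ZMod ℓ))
          = !![0, ((α ^ i : (ZMod ℓ)ˣ) : ZMod ℓ); ((α ^ j : (ZMod ℓ)ˣ) : ZMod ℓ), 0])) :
    ∃ s : ZMod (ℓ ^ 2), (Matrix.trace g.val) ^ 2 - 4 * g.val.det = s ^ 2 := by
  rcases hℓ with h | h
  · subst h
    have h2 : (2 : ZMod 5) ≠ 0 := by decide
    haveI : Fact (Nat.Prime 5) := ⟨by norm_num⟩
    exact aux17 5 h2 lift5' zero5' α g hg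
  · subst h
    have h2 : (2 : ZMod 7) ≠ 0 := by decide
    haveI : Fact (Nat.Prime 7) := ⟨by norm_num⟩
    exact aux17 7 h2 lift7' zero7' α g hg
end

section
/- Let n ≥ 3, let d be an integer with d ≡ 5 (mod 8), and let a, b be integers. Let g be the 2×2 matrix over Z/2ⁿZ obtained by reducing the integer matrix [[a, b·d·(1−d)/4],[b, a + b·d]] modulo 2ⁿ. If the characteristic polynomial of g has a root in Z/2ⁿZ, then the reduction of b modulo 2ⁿ lies in the ideal 2^{⌈n/2⌉}·(Z/2ⁿZ). -/
lemma sq_ne : ∀ x c : ZMod 8, x^2 ≠ (2*c+1)^2*5 := by decide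

lemma key (d : ℤ) (hd : d ≡ 5 [ZMOD 8]) :
    ∀ (k : ℕ) (m : ℕ) (s b : ℤ), 2*k+1 ≤ m → (2:ℤ)^m ∣ s^2 - b^2*d →
      (2:ℤ)^k ∣ b ∧ (2:ℤ)^k ∣ s
  | 0, m, s, b, _, _ => by simp
  | (k+1), m, s, b, hkm, hdvd => by
    obtain ⟨hb, hs⟩ := key d hd k m s b (by omega) hdvd
    obtain ⟨b', rfl⟩ := hb
    obtain ⟨s', rfl⟩ := hs
    have h8 : (8:ℤ) ∣ s'^2 - b'^2*d := by
      have h1 : (2:ℤ)^(2*k) * 8 ∣ (2:ℤ)^(2*k) * (s'^2 - b'^2*d) := by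
        have h2 : (2:ℤ)^(2*k+3) ∣ (2^k*s')^2 - (2^k*b')^2*d :=
          dvd_trans (pow_dvd_pow 2 (by omega)) hdvd
        calc (2:ℤ)^(2*k)*8 = 2^(2*k+3) := by ring
        _ ∣ (2^k*s')^2 - (2^k*b')^2*d := h2
        _ = 2^(2*k) * (s'^2 - b'^2*d) := by ring
      exact (mul_dvd_mul_iff_left (pow_ne_zero _ two_ne_zero)).mp h1
    rcases Int.even_or_odd b' with ⟨c, hc⟩ | ⟨c, hc⟩
    · subst hc
      have h2s : (2:ℤ) ∣ s' := by
        refine (Int.prime_two).dvd_of_dvd_pow (n := 2) ?_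
        have : s'^2 = (s'^2 - (c+c)^2*d) + (c+c)^2*d := by ring
        rw [this]
        exact dvd_add (dvd_trans (by norm_num) h8) ⟨2*c^2*d, by ring⟩
      obtain ⟨s'', rfl⟩ := h2s
      exact ⟨⟨c, by ring⟩, ⟨s'', by ring⟩⟩
    · exfalso
      subst hc
      have hcast : ((s'^2 - (2*c+1)^2*d : ℤ) : ZMod 8) = 0 :=
        (ZMod.intCast_zmod_eq_zero_iff_dvd _ 8).mpr h8
      have hd8 : ((d : ℤ) : ZMod 8) = 5 := by
        have := (ZMod.intCast_eq_intCast_iff _ _ _).mpr hd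
        simpa using this
      push_cast at hcast
      rw [sub_eq_zero, hd8] at hcast
      exact sq_ne (s' : ZMod 8) (c : ZMod 8) hcast

/-- Let `n ≥ 3`, `d ≡ 5 (mod 8)`, and let `g` be the reduction mod `2ⁿ`
of the integer matrix `[[a, b·d·(1-d)/4],[b, a + b·d]]`.  If the characteristic polynomial
of `g` has a root in `ℤ/2ⁿℤ`, then `b mod 2ⁿ` lies in the ideal `2^⌈n/2⌉ · (ℤ/2ⁿℤ)`. -/
theorem stmt_19 (n : ℕ) (hn : 3 ≤ n) (d a b : ℤ) (hd : d ≡ 5 [ZMOD 8])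
    (hroot : ∃ t : ZMod (2 ^ n),
      (((!![a, b * (d * (1 - d) / 4); b, a + b * d] : Matrix (Fin 2) (Fin 2) ℤ).map
        (Int.cast : ℤ → ZMod (2 ^ n))).charpoly).IsRoot t) :
    ∃ c : ZMod (2 ^ n), (b : ZMod (2 ^ n)) = 2 ^ ((n + 1) / 2) * c := by
  obtain ⟨t, ht⟩ := hroot
  -- 4 ∣ 1 - d
  obtain ⟨j, hj⟩ : (8:ℤ) ∣ d - 5 := Int.ModEq.dvd hd.symm
  have hm : b * (d * (1 - d) / 4) = b * (d * (-1 - 2*j)) := by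
    have h1d : 1 - d = 4 * (-1 - 2*j) := by omega
    rw [h1d]
    congr 1
    rw [show d * (4 * (-1 - 2*j)) = 4 * (d * (-1-2*j)) by ring, Int.mul_ediv_cancel_left _ (by norm_num)]
  set m : ℤ := -1 - 2*j with hmdef
  rw [hm] at ht
  -- root equation
  obtain ⟨T, rfl⟩ := ZMod.intCast_surjective t
  have heq : ((T^2 - (a + (a + b*d)) * T + (a*(a+b*d) - (b*(d*m))*b) : ℤ) : ZMod (2^n)) = 0 := by
    simp [Matrix.charpoly, Matrix.charmatrix, Matrix.det_fin_two, Polynomial.IsRoot] at ht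
    push_cast
    linear_combination ht
  have hdvd : ((2:ℤ)^n) ∣ (T^2 - (a + (a + b*d)) * T + (a*(a+b*d) - (b*(d*m))*b)) := by
    have := (ZMod.intCast_zmod_eq_zero_iff_dvd _ (2^n)).mp heq
    simpa using this
  -- lift to discriminant
  have hdisc : (2:ℤ)^(n+2) ∣ (2*T - (2*a + b*d))^2 - b^2*d := by
    obtain ⟨E, hE⟩ := hdvd
    refine ⟨E, ?_⟩
    have hdm : d + 4*m = 1 := by omega
    have : (2*T - (2*a + b*d))^2 - b^2*d
        = 4*(T^2 - (a + (a + b*d)) * T + (a*(a+b*d) - (b*(d*m))*b)) + b^2*d*(d + 4*m) - b^2*d*1 := by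
      ring
    rw [this, hdm, hE]
    ring
  have hb : (2:ℤ)^((n+1)/2) ∣ b :=
    (key d hd ((n+1)/2) (n+2) (2*T - (2*a + b*d)) b (by omega) hdisc).1
  obtain ⟨c, rfl⟩ := hb
  exact ⟨(c : ZMod (2^n)), by push_cast; ring⟩
end
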